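/- arXiv:1106.5599 — 3 statements merged into one kernel-verified Lean document; each statement's English description precedes it below -/
import Mathlib

section
/- If P is an orthogonal projection on R^p, A is a p×T real matrix, and the nuclear norms of PA and A are equal (∑_k σ_k(PA) = ∑_k σ_k(A)), then PA = A. -/
open Matrix BigOperators

/-- Negated unsorted singular values of `M` (square roots of eigenvalues of `Mᴴ * M`). -/
noncomputable def negSvalsUnsorted {m n : ℕ} (M : Matrix (Fin m) (Fin n) ℝ) : Fin n → ℝ :=
  fun i => - Real.sqrt ((Matrix.isHermitian_conjTranspose_mul_self M).eigenvalues i)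

/-- The `k`-th largest singular value of `M` (`k` is 0-indexed, so `svals M 0 = σ₁(M)`). -/
noncomputable def svals {m n : ℕ} (M : Matrix (Fin m) (Fin n) ℝ) : Fin n → ℝ :=
  fun k => - negSvalsUnsorted M (Tuple.sort (negSvalsUnsorted M) k)

/-- The nuclear norm of `M`: sum of the singular values. -/
noncomputable def nucNorm {m n : ℕ} (M : Matrix (Fin m) (Fin n) ℝ) : ℝ := ∑ k, svals M k

/-- The Frobenius (Hilbert–Schmidt) norm of `M`. -/
noncomputable def frobNorm {m n : ℕ} (M : Matrix (Fin m) (Fin n) ℝ) : ℝ :=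
  Real.sqrt (∑ i, ∑ j, (M i j)^2)

/-!
Let `W` be the partial isometry in the polar decomposition of `M = P A`, so that
`tr (Wᵀ M) = ‖M‖_*`. As `P` is an orthogonal projection fixing the range of `M`, hence that of `W`,
`tr (Wᵀ A) = tr (Wᵀ M) = ‖M‖_* = ‖A‖_*`. Computing the trace in an orthonormal eigenbasis
`(u j)` of `Aᵀ A` instead, Cauchy–Schwarz and `‖W‖ ≤ 1` give
`tr (Wᵀ A) = ∑ ⟪W u j, A u j⟫ ≤ ∑ ‖A u j‖ = ‖A‖_*`, so every term is an equality case: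
`A u j = ‖A u j‖ • W u j`. Hence `A` maps into the range of `W`, which `P` fixes.
-/

open scoped RealInnerProductSpace

theorem eq_norm_smul_of_norm_le_inner {F : Type*} [NormedAddCommGroup F] [InnerProductSpace ℝ F]
    {u x : F} (hu : ‖u‖ ≤ 1) (hx : ‖x‖ ≤ ⟪u, x⟫) :
    x = ‖x‖ • u := by
  have hsq : ‖x - ‖x‖ • u‖ ^ 2 ≤ 0 := by
    rw [norm_sub_sq_real, real_inner_smul_right, norm_smul, Real.norm_of_nonneg (norm_nonneg _),
      real_inner_comm]
    nlinarith [mul_le_mul_of_nonneg_left hx (norm_nonneg x), norm_nonneg u, norm_nonneg x,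
      mul_le_mul_of_nonneg_left (pow_le_one₀ (n := 2) (norm_nonneg u) hu) (sq_nonneg ‖x‖)]
  exact sub_eq_zero.mp (norm_eq_zero.mp (pow_eq_zero_iff two_ne_zero |>.mp
    (le_antisymm hsq (sq_nonneg _))))

namespace LinearMap

variable {ι κ E F : Type*} [Fintype ι] [Fintype κ]
  [NormedAddCommGroup E] [InnerProductSpace ℝ E] [NormedAddCommGroup F] [InnerProductSpace ℝ F]

theorem norm_sq_apply_of_pairwise_inner_eq_zero (b : OrthonormalBasis ι ℝ E) (f : E →ₗ[ℝ] F)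
    (hf : Pairwise fun i j => ⟪f (b i), f (b j)⟫ = 0) (x : E) :
    ‖f x‖ ^ 2 = ∑ i, ⟪b i, x⟫ ^ 2 * ‖f (b i)‖ ^ 2 := by
  classical
  conv_lhs => rw [← b.sum_repr' x]
  rw [← real_inner_self_eq_norm_sq, map_sum]
  simp only [map_smul, sum_inner, inner_sum, real_inner_smul_left, real_inner_smul_right]
  refine Finset.sum_congr rfl fun i _ => ?_
  rw [Finset.sum_eq_single i (fun j _ hji => by rw [hf hji, mul_zero, mul_zero]) (by simp),
    real_inner_self_eq_norm_sq]
  ring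

theorem norm_apply_le_of_pairwise_inner_eq_zero (b : OrthonormalBasis ι ℝ E) (f : E →ₗ[ℝ] F)
    (hf : Pairwise fun i j => ⟪f (b i), f (b j)⟫ = 0) (hf₁ : ∀ i, ‖f (b i)‖ ≤ 1) (x : E) :
    ‖f x‖ ≤ ‖x‖ := by
  refine (pow_le_pow_iff_left₀ (norm_nonneg _) (norm_nonneg _) two_ne_zero).mp ?_
  rw [norm_sq_apply_of_pairwise_inner_eq_zero b f hf, ← b.sum_sq_inner_right x]
  gcongr with i
  exact mul_le_of_le_one_right (sq_nonneg _) (pow_le_one₀ (norm_nonneg _) (hf₁ i))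

/-- When the `f (b i)` are pairwise orthogonal, i.e. `b` diagonalizes `f† f`, this is the partial
isometry `U` of the polar decomposition `f = U |f|`. -/
noncomputable def polarIsometry (b : OrthonormalBasis ι ℝ E) (f : E →ₗ[ℝ] F) : E →ₗ[ℝ] F :=
  b.toBasis.constr ℝ fun i => ‖f (b i)‖⁻¹ • f (b i)

theorem polarIsometry_apply (b : OrthonormalBasis ι ℝ E) (f : E →ₗ[ℝ] F) (i : ι) :
    polarIsometry b f (b i) = ‖f (b i)‖⁻¹ • f (b i) := by
  simpa [polarIsometry] using b.toBasis.constr_basis ℝ (fun i => ‖f (b i)‖⁻¹ • f (b i)) i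

theorem norm_polarIsometry_apply_le (b : OrthonormalBasis ι ℝ E) (f : E →ₗ[ℝ] F)
    (hf : Pairwise fun i j => ⟪f (b i), f (b j)⟫ = 0) (x : E) :
    ‖polarIsometry b f x‖ ≤ ‖x‖ := by
  refine norm_apply_le_of_pairwise_inner_eq_zero b _ (fun i j hij => ?_) (fun i => ?_) x
  · simp [polarIsometry_apply, real_inner_smul_left, real_inner_smul_right, hf hij]
  · rw [polarIsometry_apply, norm_smul, norm_inv, norm_norm]
    exact inv_mul_le_one_of_le₀ le_rfl (norm_nonneg _)

theorem inner_polarIsometry_apply (b : OrthonormalBasis ι ℝ E) (f : E →ₗ[ℝ] F) (i : ι) :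
    ⟪polarIsometry b f (b i), f (b i)⟫ = ‖f (b i)‖ := by
  rw [polarIsometry_apply, real_inner_smul_left, real_inner_self_eq_norm_sq]
  rcases eq_or_ne ‖f (b i)‖ 0 with h | h
  · simp [h]
  · field_simp

theorem comp_polarIsometry (b : OrthonormalBasis ι ℝ E) {f : E →ₗ[ℝ] F} {g : F →ₗ[ℝ] F}
    (hgf : g ∘ₗ f = f) : g ∘ₗ polarIsometry b f = polarIsometry b f :=
  b.toBasis.ext fun i => by simp [polarIsometry_apply, ← comp_apply g f, hgf]

theorem apply_eq_norm_smul_of_sum_norm_le_sum_inner (v : ι → E) (hv : ∀ i, ‖v i‖ ≤ 1)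
    {a w : E →ₗ[ℝ] F} (hw : ∀ x, ‖w x‖ ≤ ‖x‖)
    (h : ∑ i, ‖a (v i)‖ ≤ ∑ i, ⟪w (v i), a (v i)⟫) (i : ι) :
    a (v i) = ‖a (v i)‖ • w (v i) := by
  have hwv : ∀ i, ‖w (v i)‖ ≤ 1 := fun i => (hw _).trans (hv i)
  have hle : ∀ i, ⟪w (v i), a (v i)⟫ ≤ ‖a (v i)‖ := fun i =>
    (real_inner_le_norm _ _).trans (mul_le_of_le_one_left (norm_nonneg _) (hwv i))
  have heq := (Finset.sum_eq_sum_iff_of_le fun i _ => hle i).mp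
    (le_antisymm (Finset.sum_le_sum fun i _ => hle i) h)
  exact eq_norm_smul_of_norm_le_inner (hwv i) (heq i (Finset.mem_univ i)).ge

variable [FiniteDimensional ℝ E] [FiniteDimensional ℝ F]

theorem sum_inner_apply_eq_trace_adjoint_comp (b : OrthonormalBasis ι ℝ E) (f g : E →ₗ[ℝ] F) :
    ∑ i, ⟪f (b i), g (b i)⟫ = trace ℝ E (adjoint f ∘ₗ g) := by
  simp [trace_eq_sum_inner _ b, adjoint_inner_right]

theorem comp_eq_self_of_sum_norm_le {π : F →ₗ[ℝ] F} (hπ : π.IsSymmetric) (hππ : π ∘ₗ π = π)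
    (a : E →ₗ[ℝ] F) (u : OrthonormalBasis ι ℝ E) (v : OrthonormalBasis κ ℝ E)
    (hv : Pairwise fun i j => ⟪π (a (v i)), π (a (v j))⟫ = 0)
    (h : ∑ j, ‖a (u j)‖ ≤ ∑ i, ‖π (a (v i))‖) :
    π ∘ₗ a = a := by
  set w := polarIsometry v (π ∘ₗ a)
  have hπw : π ∘ₗ w = w := comp_polarIsometry v (by rw [← comp_assoc, hππ])
  have key : ∑ j, ‖a (u j)‖ ≤ ∑ j, ⟪w (u j), a (u j)⟫ := calc
    ∑ j, ‖a (u j)‖ ≤ ∑ i, ‖(π ∘ₗ a) (v i)‖ := h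
    _ = ∑ i, ⟪w (v i), (π ∘ₗ a) (v i)⟫ := by simp only [w, inner_polarIsometry_apply]
    _ = ∑ j, ⟪w (u j), (π ∘ₗ a) (u j)⟫ := by
      rw [sum_inner_apply_eq_trace_adjoint_comp, sum_inner_apply_eq_trace_adjoint_comp]
    _ = ∑ j, ⟪w (u j), a (u j)⟫ := by
      simp only [comp_apply, ← hπ _ (a _), ← comp_apply π w, hπw]
  have hw : ∀ x, ‖w x‖ ≤ ‖x‖ := norm_polarIsometry_apply_le v _ hv
  have hau := apply_eq_norm_smul_of_sum_norm_le_sum_inner u (fun j => (u.orthonormal.1 j).le) hw key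
  exact u.toBasis.ext fun j => by
    simp only [OrthonormalBasis.coe_toBasis, comp_apply]
    rw [hau j, map_smul, ← comp_apply π w, hπw]

end LinearMap

namespace Matrix

variable {m n : Type*} [Fintype m] [DecidableEq m] [Fintype n] [DecidableEq n]

theorem inner_toEuclideanLin_eigenvectorBasis (A : Matrix m n ℝ) (hA : (Aᴴ * A).IsHermitian)
    (i j : n) :
    ⟪toEuclideanLin A (hA.eigenvectorBasis i), toEuclideanLin A (hA.eigenvectorBasis j)⟫ =
      hA.eigenvalues j * ⟪hA.eigenvectorBasis i, hA.eigenvectorBasis j⟫ := by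
  rw [← LinearMap.adjoint_inner_right, ← LinearMap.comp_apply,
    ← toEuclideanLin_conjTranspose_eq_adjoint, ← toLpLin_mul_same, toLpLin_apply,
    hA.mulVec_eigenvectorBasis, WithLp.toLp_smul, WithLp.toLp_ofLp, real_inner_smul_right]

theorem pairwise_inner_toEuclideanLin_eigenvectorBasis (A : Matrix m n ℝ)
    (hA : (Aᴴ * A).IsHermitian) :
    Pairwise fun i j =>
      ⟪toEuclideanLin A (hA.eigenvectorBasis i), toEuclideanLin A (hA.eigenvectorBasis j)⟫ = 0 :=
  fun i j hij => by
    simp only [inner_toEuclideanLin_eigenvectorBasis, hA.eigenvectorBasis.orthonormal.2 hij,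
      mul_zero]

theorem norm_toEuclideanLin_eigenvectorBasis (A : Matrix m n ℝ) (hA : (Aᴴ * A).IsHermitian)
    (j : n) :
    ‖toEuclideanLin A (hA.eigenvectorBasis j)‖ = √(hA.eigenvalues j) := by
  rw [norm_eq_sqrt_real_inner, inner_toEuclideanLin_eigenvectorBasis, real_inner_self_eq_norm_sq,
    hA.eigenvectorBasis.orthonormal.1 j, one_pow, mul_one]

end Matrix

theorem nucNorm_eq_sum_norm_toEuclideanLin_eigenvectorBasis {m n : ℕ}
    (A : Matrix (Fin m) (Fin n) ℝ) (hA : (Aᴴ * A).IsHermitian) :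
    nucNorm A = ∑ j, ‖toEuclideanLin A (hA.eigenvectorBasis j)‖ := by
  simp only [norm_toEuclideanLin_eigenvectorBasis, nucNorm, svals, negSvalsUnsorted, neg_neg]
  exact Equiv.sum_comp (Tuple.sort (negSvalsUnsorted A)) fun j => √(hA.eigenvalues j)

/-- If `P` is an orthogonal projection on `ℝ^p`, `A` is a `p×T` real matrix,
and the nuclear norms of `P * A` and `A` are equal, then `P * A = A`. -/
theorem proj_mul_eq_of_nucNorm_eq {p T : ℕ} (P : Matrix (Fin p) (Fin p) ℝ)
    (A : Matrix (Fin p) (Fin T) ℝ) (hidem : P * P = P) (hsymm : P.IsSymm)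
    (heq : nucNorm (P * A) = nucNorm A) :
    P * A = A := by
  have hPA : toEuclideanLin (P * A) = toEuclideanLin P ∘ₗ toEuclideanLin A := toLpLin_mul_same ..
  have hA := isHermitian_conjTranspose_mul_self A
  have hM := isHermitian_conjTranspose_mul_self (P * A)
  apply toEuclideanLin.injective
  rw [hPA]
  refine LinearMap.comp_eq_self_of_sum_norm_le
    (isSymmetric_toEuclideanLin_iff.mpr (isHermitian_iff_isSymm.mpr hsymm))
    (by rw [← toLpLin_mul_same, hidem]) _ hA.eigenvectorBasis hM.eigenvectorBasis
    (by simpa [hPA] using pairwise_inner_toEuclideanLin_eigenvectorBasis (P * A) hM) (le_of_eq ?_)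
  rw [← nucNorm_eq_sum_norm_toEuclideanLin_eigenvectorBasis, ← heq,
    nucNorm_eq_sum_norm_toEuclideanLin_eigenvectorBasis _ hM, hPA]
  rfl
end

section
/- Any minimizer Â of the nuclear-norm-penalized least squares criterion A ↦ ‖Y − XA‖² + λ∑_k σ_k(A) over all p×T matrices satisfies Π Â = Â, where Π is the orthogonal projection onto the range of X^T; consequently Â is also a minimizer of the same criterion restricted to matrices whose column space (range) is contained in range(X^T). -/
open Matrix BigOperators

/-!
Since `X Π = X`, replacing `Â` by `Π Â` does not change the fit term, so minimality gives
`‖Â‖_* ≤ ‖Π Â‖_*`. Conversely `ÂᴴÂ = (ΠÂ)ᴴ(ΠÂ) + ((1 - Π)Â)ᴴ((1 - Π)Â)` dominates `(ΠÂ)ᴴ(ΠÂ)` in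
the Loewner order, and the nuclear norm is `tr √(AᴴA)` with `√` operator monotone. Hence the two
square roots differ by a positive semidefinite matrix of trace `≤ 0`, i.e. they coincide, so the two
Gram matrices coincide and `(1 - Π)Â = 0`.
-/

open scoped MatrixOrder ComplexOrder

namespace Matrix

section RCLike

variable {n 𝕜 : Type*} [Fintype n] [DecidableEq n] [RCLike 𝕜]

theorem PosSemidef.sub_of_mul_self_sub {S T : Matrix n n 𝕜} (hS : S.PosSemidef)
    (hT : T.PosSemidef) (h : (T * T - S * S).PosSemidef) : (T - S).PosSemidef := by
  have hD : (T - S).IsHermitian := hT.1.sub hS.1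
  rw [hD.posSemidef_iff_eigenvalues_nonneg]
  intro i
  by_contra! hi
  set t := hD.eigenvalues i
  have ht : (t : 𝕜) ≠ 0 := by exact_mod_cast hi.ne
  set v : n → 𝕜 := ⇑(hD.eigenvectorBasis i)
  have hv : v ≠ 0 := fun h =>
    hD.eigenvectorBasis.orthonormal.ne_zero i (by ext j; exact congrFun h j)
  have hDv : (T - S) *ᵥ v = (t : 𝕜) • v := by
    rw [hD.mulVec_eigenvectorBasis i, RCLike.real_smul_eq_coe_smul (K := 𝕜)]
  have hvD : star v ᵥ* (T - S) = (t : 𝕜) • star v := by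
    rw [← hD.eq, ← star_mulVec, hDv, star_smul, RCLike.star_def, RCLike.conj_ofReal]
  let q : Matrix n n 𝕜 → 𝕜 := fun M => star v ⬝ᵥ M *ᵥ v
  have hqT : 0 ≤ q T := hT.dotProduct_mulVec_nonneg v
  have hqS : 0 ≤ q S := hS.dotProduct_mulVec_nonneg v
  -- `T² - S² = T (T - S) + (T - S) S`, and `v` is an eigenvector of `T - S` on both sides.
  have hq_sq : q (T * T - S * S) = t * (q T + q S) := by
    have hsplit : T * T - S * S = T * (T - S) + (T - S) * S := by
      rw [mul_sub, sub_mul]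
      abel
    simp only [q, hsplit, add_mulVec, dotProduct_add, ← mulVec_mulVec, hDv, mulVec_smul,
      dotProduct_smul, dotProduct_mulVec (star v) (T - S), hvD, smul_dotProduct, smul_eq_mul,
      mul_add]
  have hsum : q T + q S = 0 := by
    have hpos : 0 ≤ (t : 𝕜) * (q T + q S) := hq_sq ▸ h.dotProduct_mulVec_nonneg v
    have hneg : (t : 𝕜) * (q T + q S) ≤ 0 :=
      mul_nonpos_of_nonpos_of_nonneg (by exact_mod_cast hi.le) (add_nonneg hqT hqS)
    exact (mul_eq_zero.mp (le_antisymm hneg hpos)).resolve_left ht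
  obtain ⟨hqT0, hqS0⟩ := (add_eq_zero_iff_of_nonneg hqT hqS).mp hsum
  have hqD : q T - q S = t * (star v ⬝ᵥ v) := by
    simp only [q, ← dotProduct_sub, ← sub_mulVec, hDv, dotProduct_smul, smul_eq_mul]
  rw [hqT0, hqS0, sub_zero, eq_comm] at hqD
  exact hv (dotProduct_star_self_eq_zero.mp ((mul_eq_zero.mp hqD).resolve_left ht))

theorem monotone_sqrt : Monotone (CFC.sqrt : Matrix n n 𝕜 → Matrix n n 𝕜) := by
  intro A B hAB
  by_cases hA : 0 ≤ A
  · refine sub_nonneg.mp (PosSemidef.sub_of_mul_self_sub (CFC.sqrt_nonneg A).posSemidef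
      (CFC.sqrt_nonneg B).posSemidef ?_).nonneg
    rw [CFC.sqrt_mul_sqrt_self A, CFC.sqrt_mul_sqrt_self B (hA.trans hAB)]
    exact (sub_nonneg.mpr hAB).posSemidef
  · rw [CFC.sqrt_of_not_nonneg hA]
    exact CFC.sqrt_nonneg B

theorem IsHermitian.trace_cfc {A : Matrix n n 𝕜} (hA : A.IsHermitian) (f : ℝ → ℝ) :
    (cfc f A).trace = ∑ i, (f (hA.eigenvalues i) : 𝕜) := by
  rw [hA.cfc_eq, IsHermitian.cfc, Unitary.conjStarAlgAut_apply, trace_mul_cycle,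
    Unitary.coe_star_mul_self, one_mul, trace_diagonal]
  rfl

theorem PosSemidef.trace_sqrt {A : Matrix n n 𝕜} (hA : A.PosSemidef) :
    (CFC.sqrt A).trace = ∑ i, (√(hA.1.eigenvalues i) : 𝕜) := by
  rw [CFC.sqrt_eq_real_sqrt A hA.nonneg, cfcₙ_eq_cfc, hA.1.trace_cfc]

theorem eq_of_le_of_trace_sqrt_le {A B : Matrix n n 𝕜} (hA : 0 ≤ A) (hAB : A ≤ B)
    (h : (CFC.sqrt B).trace ≤ (CFC.sqrt A).trace) : A = B := by
  have hsqrt : (CFC.sqrt B - CFC.sqrt A).PosSemidef :=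
    (sub_nonneg.mpr (monotone_sqrt hAB)).posSemidef
  have htr : (CFC.sqrt B - CFC.sqrt A).trace = 0 :=
    le_antisymm (by rw [trace_sub]; exact sub_nonpos.mpr h) hsqrt.trace_nonneg
  rw [← CFC.sqrt_mul_sqrt_self A, ← CFC.sqrt_mul_sqrt_self B (hA.trans hAB),
    sub_eq_zero.mp (hsqrt.trace_eq_zero_iff.mp htr)]

end RCLike

variable {m n R : Type*} [Fintype m]

theorem _root_.IsStarProjection.conjTranspose_mul_self_eq [DecidableEq m] [CommRing R]
    [StarRing R] {P : Matrix m m R} (hP : IsStarProjection P) (A : Matrix m n R) :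
    Aᴴ * A = (P * A)ᴴ * (P * A) + ((1 - P) * A)ᴴ * ((1 - P) * A) := by
  have hPh : Pᴴ = P := hP.isSelfAdjoint
  have hPP : P * P = P := hP.isIdempotentElem
  have hQQ : (1 - P)ᴴ * (1 - P) = 1 - P := by
    rw [conjTranspose_sub, conjTranspose_one, hPh, sub_mul, mul_sub, mul_sub, hPP]
    simp
  rw [conjTranspose_mul, conjTranspose_mul, Matrix.mul_assoc, ← Matrix.mul_assoc Pᴴ, hPh, hPP,
    Matrix.mul_assoc Aᴴ, ← Matrix.mul_assoc (1 - P)ᴴ, hQQ, ← Matrix.mul_add, ← Matrix.add_mul,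
    add_sub_cancel, Matrix.one_mul]

theorem mul_eq_self_of_range_le [Fintype n] [CommSemiring R] {P : Matrix m m R}
    (hP : IsIdempotentElem P) {M : Matrix m n R}
    (h : LinearMap.range M.mulVecLin ≤ LinearMap.range P.mulVecLin) : P * M = M := by
  refine ext_iff_mulVec.mpr fun x => ?_
  obtain ⟨w, hw⟩ := h (LinearMap.mem_range_self _ x)
  rw [mulVecLin_apply, mulVecLin_apply] at hw
  rw [← mulVec_mulVec, ← hw, mulVec_mulVec, hP.eq]

end Matrix

theorem nucNorm_eq_trace_sqrt {m n : ℕ} (M : Matrix (Fin m) (Fin n) ℝ) :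
    nucNorm M = (CFC.sqrt (Mᴴ * M)).trace := by
  rw [(posSemidef_conjTranspose_mul_self M).trace_sqrt, nucNorm]
  unfold svals
  rw [Equiv.sum_comp (Tuple.sort (negSvalsUnsorted M)) (fun i => - negSvalsUnsorted M i)]
  simp [negSvalsUnsorted]

theorem IsStarProjection.mul_eq_self_of_nucNorm_le {m n : ℕ} {P : Matrix (Fin m) (Fin m) ℝ}
    (hP : IsStarProjection P) {A : Matrix (Fin m) (Fin n) ℝ}
    (h : nucNorm A ≤ nucNorm (P * A)) : P * A = A := by
  have hdecomp := hP.conjTranspose_mul_self_eq A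
  have hle : (P * A)ᴴ * (P * A) ≤ Aᴴ * A := by
    rw [Matrix.le_iff, hdecomp, add_sub_cancel_left]
    exact posSemidef_conjTranspose_mul_self _
  have hgram := eq_of_le_of_trace_sqrt_le (posSemidef_conjTranspose_mul_self _).nonneg hle
    (by simpa only [nucNorm_eq_trace_sqrt] using h)
  rw [← hgram, left_eq_add, conjTranspose_mul_self_eq_zero, Matrix.sub_mul, Matrix.one_mul,
    sub_eq_zero] at hdecomp
  exact hdecomp.symm

/-- Any minimizer `Â` of `A ↦ ‖Y − XA‖² + λ ∑_k σ_k(A)` over all `p×T` matrices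
satisfies `Pr Â = Â`, where `Pr` is the orthogonal projection onto `range Xᵀ`; consequently `Â`
also minimizes the criterion over matrices whose column space is contained in `range Xᵀ`. -/
theorem minimizer_fixed_by_proj {n p T : ℕ} (Y : Matrix (Fin n) (Fin T) ℝ)
    (X : Matrix (Fin n) (Fin p) ℝ) (lam : ℝ) (hlam : 0 < lam)
    (Pr : Matrix (Fin p) (Fin p) ℝ) (hidem : Pr * Pr = Pr) (hsymm : Pr.IsSymm)
    (hrange : LinearMap.range Pr.mulVecLin = LinearMap.range Xᵀ.mulVecLin)
    (Ahat : Matrix (Fin p) (Fin T) ℝ)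
    (hmin : ∀ A : Matrix (Fin p) (Fin T) ℝ,
      frobNorm (Y - X * Ahat) ^ 2 + lam * nucNorm Ahat ≤
        frobNorm (Y - X * A) ^ 2 + lam * nucNorm A) :
    Pr * Ahat = Ahat ∧
    ∀ A : Matrix (Fin p) (Fin T) ℝ,
      LinearMap.range A.mulVecLin ≤ LinearMap.range Xᵀ.mulVecLin →
      frobNorm (Y - X * Ahat) ^ 2 + lam * nucNorm Ahat ≤
        frobNorm (Y - X * A) ^ 2 + lam * nucNorm A := by
  have hP : IsStarProjection Pr :=
    ⟨hidem, by rw [IsSelfAdjoint, star_eq_conjTranspose, conjTranspose_eq_transpose_of_trivial,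
      hsymm.eq]⟩
  have hXP : X * Pr = X := by
    simpa [hsymm.eq] using congrArg transpose (mul_eq_self_of_range_le hidem hrange.ge)
  refine ⟨hP.mul_eq_self_of_nucNorm_le ?_, fun A _ => hmin A⟩
  have hcrit := hmin (Pr * Ahat)
  rw [← Matrix.mul_assoc, hXP, add_le_add_iff_left] at hcrit
  exact le_of_mul_le_mul_left hcrit hlam
end

section
/- Let X ∈ R^{n×p} with q = rank(X), and suppose σ_q(X) ≥ 1/μ. If Â minimizes A ↦ ‖Y − XA‖² + λ∑_k σ_k(A) with Y = XA_0 + E and λ ≥ 2σ_1(X^T E), then ‖XÂ − XA_0‖² ≤ inf over A ∈ R^{p×T} of {‖XA − XA_0‖² + (3/2)μ²λ² rank(A)}. -/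
open Matrix BigOperators

namespace OracleAux

/-- trace inner product -/
noncomputable def ip {a b : ℕ} (M N : Matrix (Fin a) (Fin b) ℝ) : ℝ := (Mᵀ * N).trace

lemma ip_eq_sum {a b : ℕ} (M N : Matrix (Fin a) (Fin b) ℝ) :
    ip M N = ∑ j, ∑ i, M i j * N i j := by
  simp [ip, Matrix.trace, Matrix.diag, Matrix.mul_apply, Matrix.transpose_apply]

lemma ip_comm {a b : ℕ} (M N : Matrix (Fin a) (Fin b) ℝ) : ip M N = ip N M := by
  simp only [ip_eq_sum]
  exact Finset.sum_congr rfl fun j _ => Finset.sum_congr rfl fun i _ => mul_comm _ _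

lemma ip_add_right {a b : ℕ} (M N₁ N₂ : Matrix (Fin a) (Fin b) ℝ) :
    ip M (N₁ + N₂) = ip M N₁ + ip M N₂ := by
  simp [ip, Matrix.mul_add]

lemma ip_add_left {a b : ℕ} (M₁ M₂ N : Matrix (Fin a) (Fin b) ℝ) :
    ip (M₁ + M₂) N = ip M₁ N + ip M₂ N := by
  simp [ip, Matrix.transpose_add, Matrix.add_mul]

lemma ip_sub_right {a b : ℕ} (M N₁ N₂ : Matrix (Fin a) (Fin b) ℝ) :
    ip M (N₁ - N₂) = ip M N₁ - ip M N₂ := by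
  simp [ip, Matrix.mul_sub]

lemma ip_sub_left {a b : ℕ} (M₁ M₂ N : Matrix (Fin a) (Fin b) ℝ) :
    ip (M₁ - M₂) N = ip M₁ N - ip M₂ N := by
  simp [ip, Matrix.transpose_sub, Matrix.sub_mul]

lemma ip_smul_right {a b : ℕ} (c : ℝ) (M N : Matrix (Fin a) (Fin b) ℝ) :
    ip M (c • N) = c * ip M N := by
  simp [ip, Matrix.mul_smul, Matrix.trace_smul, smul_eq_mul]

lemma ip_smul_left {a b : ℕ} (c : ℝ) (M N : Matrix (Fin a) (Fin b) ℝ) :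
    ip (c • M) N = c * ip M N := by
  rw [ip_comm, ip_smul_right, ip_comm]

lemma ip_self_nonneg {a b : ℕ} (M : Matrix (Fin a) (Fin b) ℝ) : 0 ≤ ip M M := by
  rw [ip_eq_sum]
  exact Finset.sum_nonneg fun j _ => Finset.sum_nonneg fun i _ => mul_self_nonneg _

lemma frobNorm_eq {a b : ℕ} (M : Matrix (Fin a) (Fin b) ℝ) :
    frobNorm M = Real.sqrt (ip M M) := by
  rw [frobNorm, ip_eq_sum, Finset.sum_comm]
  congr 1
  exact Finset.sum_congr rfl fun i _ => Finset.sum_congr rfl fun j _ => by rw [sq]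

lemma frobNorm_nonneg {a b : ℕ} (M : Matrix (Fin a) (Fin b) ℝ) : 0 ≤ frobNorm M := by
  rw [frobNorm_eq]; exact Real.sqrt_nonneg _

lemma frobNorm_sq {a b : ℕ} (M : Matrix (Fin a) (Fin b) ℝ) :
    frobNorm M ^ 2 = ip M M := by
  rw [frobNorm_eq, Real.sq_sqrt (ip_self_nonneg M)]

lemma ip_eq_sum' {a b : ℕ} (M N : Matrix (Fin a) (Fin b) ℝ) :
    ip M N = ∑ p : Fin b × Fin a, M p.2 p.1 * N p.2 p.1 := by
  rw [ip_eq_sum]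
  exact (Fintype.sum_prod_type (fun p : Fin b × Fin a => M p.2 p.1 * N p.2 p.1)).symm

/-- Cauchy–Schwarz for the trace inner product. -/
lemma abs_ip_le {a b : ℕ} (M N : Matrix (Fin a) (Fin b) ℝ) :
    |ip M N| ≤ frobNorm M * frobNorm N := by
  have h2 : (ip M N)^2 ≤ (ip M M) * (ip N N) := by
    rw [ip_eq_sum' M N, ip_eq_sum' M M, ip_eq_sum' N N]
    have := Finset.sum_mul_sq_le_sq_mul_sq Finset.univ
      (fun p : Fin b × Fin a => M p.2 p.1) (fun p => N p.2 p.1)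
    calc (∑ p : Fin b × Fin a, M p.2 p.1 * N p.2 p.1)^2
        ≤ (∑ p : Fin b × Fin a, (M p.2 p.1)^2) * (∑ p : Fin b × Fin a, (N p.2 p.1)^2) := this
      _ = (∑ p : Fin b × Fin a, M p.2 p.1 * M p.2 p.1) *
            (∑ p : Fin b × Fin a, N p.2 p.1 * N p.2 p.1) := by
          simp only [sq]
  have habs : |ip M N| = Real.sqrt ((ip M N)^2) := (Real.sqrt_sq_eq_abs _).symm
  rw [habs, frobNorm_eq, frobNorm_eq, ← Real.sqrt_mul (ip_self_nonneg M)]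
  exact Real.sqrt_le_sqrt h2

lemma ip_le {a b : ℕ} (M N : Matrix (Fin a) (Fin b) ℝ) :
    ip M N ≤ frobNorm M * frobNorm N :=
  (le_abs_self _).trans (abs_ip_le M N)

lemma neg_ip_le {a b : ℕ} (M N : Matrix (Fin a) (Fin b) ℝ) :
    -ip M N ≤ frobNorm M * frobNorm N :=
  (neg_le_abs _).trans (abs_ip_le M N)

/-- moving a left factor across -/
lemma ip_mul_left {a b c : ℕ} (P : Matrix (Fin a) (Fin c) ℝ) (M : Matrix (Fin c) (Fin b) ℝ)
    (N : Matrix (Fin a) (Fin b) ℝ) : ip (P * M) N = ip M (Pᵀ * N) := by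
  simp [ip, Matrix.transpose_mul, Matrix.mul_assoc]

/-- moving a right factor across -/
lemma ip_mul_right {a b c : ℕ} (M : Matrix (Fin a) (Fin c) ℝ) (Q : Matrix (Fin c) (Fin b) ℝ)
    (N : Matrix (Fin a) (Fin b) ℝ) : ip (M * Q) N = ip M (N * Qᵀ) := by
  simp only [ip, Matrix.transpose_mul]
  rw [Matrix.mul_assoc, Matrix.trace_mul_comm, Matrix.mul_assoc]

/-- both-sided move -/
lemma ip_conj {a b c e : ℕ} (P : Matrix (Fin a) (Fin c) ℝ) (M : Matrix (Fin c) (Fin e) ℝ)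
    (Q : Matrix (Fin e) (Fin b) ℝ) (N : Matrix (Fin a) (Fin b) ℝ) :
    ip (P * M * Q) N = ip M (Pᵀ * N * Qᵀ) := by
  rw [ip_mul_right, ip_mul_left, Matrix.mul_assoc]

lemma ip_EX {nn b c : ℕ} (E : Matrix (Fin nn) (Fin b) ℝ) (X : Matrix (Fin nn) (Fin c) ℝ)
    (D : Matrix (Fin c) (Fin b) ℝ) : ip E (X * D) = ip (Xᵀ * E) D := by
  simp [ip, Matrix.transpose_mul, Matrix.mul_assoc]

end OracleAux

namespace OracleAux

variable {a b : ℕ}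

noncomputable def eig (M : Matrix (Fin a) (Fin b) ℝ) : Fin b → ℝ :=
  (Matrix.isHermitian_conjTranspose_mul_self M).eigenvalues

noncomputable def UU (M : Matrix (Fin a) (Fin b) ℝ) : Matrix (Fin b) (Fin b) ℝ :=
  ((Matrix.isHermitian_conjTranspose_mul_self M).eigenvectorUnitary : Matrix (Fin b) (Fin b) ℝ)

lemma conjT_eq (M : Matrix (Fin a) (Fin b) ℝ) : Mᴴ = Mᵀ :=
  Matrix.conjTranspose_eq_transpose_of_trivial M

lemma UtU (M : Matrix (Fin a) (Fin b) ℝ) : (UU M)ᵀ * UU M = 1 := by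
  have h := Matrix.mem_unitaryGroup_iff'.mp
    (Matrix.isHermitian_conjTranspose_mul_self M).eigenvectorUnitary.2
  rw [← conjT_eq (UU M), ← Matrix.star_eq_conjTranspose]
  exact h

lemma UUt (M : Matrix (Fin a) (Fin b) ℝ) : UU M * (UU M)ᵀ = 1 := by
  have h := Matrix.mem_unitaryGroup_iff.mp
    (Matrix.isHermitian_conjTranspose_mul_self M).eigenvectorUnitary.2
  rw [← conjT_eq (UU M), ← Matrix.star_eq_conjTranspose]
  exact h

lemma spec (M : Matrix (Fin a) (Fin b) ℝ) :
    Mᵀ * M = UU M * Matrix.diagonal (eig M) * (UU M)ᵀ := by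
  have h := (Matrix.isHermitian_conjTranspose_mul_self M).spectral_theorem
  rw [Unitary.conjStarAlgAut_apply] at h
  have h2 : (RCLike.ofReal ∘ (Matrix.isHermitian_conjTranspose_mul_self M).eigenvalues : Fin b → ℝ)
      = eig M := by
    funext k
    simp [eig, RCLike.ofReal_real_eq_id]
  calc Mᵀ * M = Mᴴ * M := by rw [conjT_eq]
    _ = _ := h
    _ = UU M * Matrix.diagonal (eig M) * (UU M)ᵀ := by
        rw [h2]
        congr 1

lemma eig_nonneg (M : Matrix (Fin a) (Fin b) ℝ) (k : Fin b) : 0 ≤ eig M k :=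
  (Matrix.posSemidef_conjTranspose_mul_self M).eigenvalues_nonneg k

noncomputable def GG (M : Matrix (Fin a) (Fin b) ℝ) : Matrix (Fin a) (Fin b) ℝ := M * UU M

lemma GtG (M : Matrix (Fin a) (Fin b) ℝ) :
    (GG M)ᵀ * GG M = Matrix.diagonal (eig M) := by
  unfold GG
  rw [Matrix.transpose_mul]
  calc (UU M)ᵀ * Mᵀ * (M * UU M) = (UU M)ᵀ * (Mᵀ * M) * UU M := by
        rw [Matrix.mul_assoc, Matrix.mul_assoc, Matrix.mul_assoc]
    _ = (UU M)ᵀ * (UU M * Matrix.diagonal (eig M) * (UU M)ᵀ) * UU M := by rw [spec]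
    _ = ((UU M)ᵀ * UU M) * Matrix.diagonal (eig M) * ((UU M)ᵀ * UU M) := by
        simp only [Matrix.mul_assoc]
    _ = Matrix.diagonal (eig M) := by rw [UtU]; simp

lemma M_eq_G_Ut (M : Matrix (Fin a) (Fin b) ℝ) : M = GG M * (UU M)ᵀ := by
  unfold GG
  rw [Matrix.mul_assoc, UUt, Matrix.mul_one]

lemma GtG_diag (M : Matrix (Fin a) (Fin b) ℝ) (k : Fin b) :
    ∑ i, (GG M i k)^2 = eig M k := by
  have := congrArg (fun Z => Z k k) (GtG M)
  simp only [Matrix.mul_apply, Matrix.transpose_apply, Matrix.diagonal_apply_eq] at this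
  rw [← this]
  exact Finset.sum_congr rfl fun i _ => (sq _)

lemma G_col_eq_zero (M : Matrix (Fin a) (Fin b) ℝ) (k : Fin b) (h : eig M k = 0) (i : Fin a) :
    GG M i k = 0 := by
  have h1 : ∑ i, (GG M i k)^2 = 0 := by rw [GtG_diag, h]
  have := (Finset.sum_eq_zero_iff_of_nonneg (fun i _ => sq_nonneg (GG M i k))).mp h1 i
    (Finset.mem_univ i)
  exact pow_eq_zero_iff (two_ne_zero) |>.mp this

/-- multiplying G by the 0-1 indicator diagonal does nothing -/
lemma G_mul_ind (M : Matrix (Fin a) (Fin b) ℝ) (f : Fin b → ℝ)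
    (hf : ∀ k, 0 < eig M k → f k = 1) :
    GG M * Matrix.diagonal f = GG M := by
  ext i k
  rw [Matrix.mul_apply]
  rw [Finset.sum_eq_single k]
  · rcases lt_or_eq_of_le (eig_nonneg M k) with h | h
    · rw [Matrix.diagonal_apply_eq, hf k h, mul_one]
    · rw [G_col_eq_zero M k h.symm, zero_mul]
  · intro j _ hj
    rw [Matrix.diagonal_apply_ne _ hj, mul_zero]
  · intro h; exact absurd (Finset.mem_univ k) h



lemma nucNorm_eq_sum_sqrt (M : Matrix (Fin a) (Fin b) ℝ) :
    nucNorm M = ∑ k, Real.sqrt (eig M k) := by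
  unfold nucNorm svals negSvalsUnsorted
  simp only [neg_neg]
  exact Equiv.sum_comp (Tuple.sort _) (fun k => Real.sqrt (eig M k))

lemma nucNorm_nonneg (M : Matrix (Fin a) (Fin b) ℝ) : 0 ≤ nucNorm M := by
  rw [nucNorm_eq_sum_sqrt]
  exact Finset.sum_nonneg fun k _ => Real.sqrt_nonneg _

lemma svals_eq (M : Matrix (Fin a) (Fin b) ℝ) (k : Fin b) :
    svals M k = Real.sqrt (eig M (Tuple.sort (negSvalsUnsorted M) k)) := by
  show -negSvalsUnsorted M _ = _
  show -(-Real.sqrt _) = _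
  rw [neg_neg]
  rfl

lemma negSvals_eq (M : Matrix (Fin a) (Fin b) ℝ) (k : Fin b) :
    negSvalsUnsorted M k = -Real.sqrt (eig M k) := rfl

lemma svals_zero_ge (M : Matrix (Fin a) (Fin b) ℝ) (hb : 0 < b) (j : Fin b) :
    Real.sqrt (eig M j) ≤ svals M ⟨0, hb⟩ := by
  have h0 : (⟨0, hb⟩ : Fin b) ≤ (Tuple.sort (negSvalsUnsorted M)).symm j :=
    Fin.le_def.mpr (Nat.zero_le _)
  have h1 := Tuple.monotone_sort (negSvalsUnsorted M) h0
  simp only [Function.comp_apply, Equiv.apply_symm_apply] at h1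
  rw [negSvals_eq, negSvals_eq] at h1
  rw [svals_eq]
  linarith

lemma svals_zero_nonneg (M : Matrix (Fin a) (Fin b) ℝ) (hb : 0 < b) :
    0 ≤ svals M ⟨0, hb⟩ :=
  le_trans (Real.sqrt_nonneg _) (svals_zero_ge M hb ⟨0, hb⟩)

/-- dot products -/
lemma dot_self_nonneg (v : Fin b → ℝ) : 0 ≤ dotProduct v v :=
  Finset.sum_nonneg fun i _ => mul_self_nonneg _

lemma dot_comm' (u v : Fin b → ℝ) : dotProduct u v = dotProduct v u :=
  dotProduct_comm u v

lemma dot_cs (u v : Fin b → ℝ) :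
    dotProduct u v ≤ Real.sqrt (dotProduct u u) * Real.sqrt (dotProduct v v) := by
  have h2 : (dotProduct u v)^2 ≤ (dotProduct u u) * (dotProduct v v) := by
    unfold dotProduct
    have := Finset.sum_mul_sq_le_sq_mul_sq Finset.univ u v
    calc (∑ i, u i * v i)^2 ≤ (∑ i, (u i)^2) * (∑ i, (v i)^2) := this
      _ = (∑ i, u i * u i) * (∑ i, v i * v i) := by simp only [sq]
  calc dotProduct u v ≤ |dotProduct u v| := le_abs_self _
    _ = Real.sqrt ((dotProduct u v)^2) := (Real.sqrt_sq_eq_abs _).symm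
    _ ≤ Real.sqrt ((dotProduct u u) * (dotProduct v v)) := Real.sqrt_le_sqrt h2
    _ = _ := Real.sqrt_mul (dot_self_nonneg u) _

lemma dot_move {c : ℕ} (C : Matrix (Fin c) (Fin b) ℝ) (z : Fin c → ℝ) (w : Fin b → ℝ) :
    dotProduct z (C *ᵥ w) = dotProduct (Cᵀ *ᵥ z) w := by
  rw [Matrix.dotProduct_mulVec, ← Matrix.vecMul_transpose]; rfl

lemma dot_mulVec_self {c : ℕ} (C : Matrix (Fin c) (Fin b) ℝ) (v : Fin b → ℝ) :
    dotProduct (C *ᵥ v) (C *ᵥ v) = dotProduct v ((Cᵀ * C) *ᵥ v) := by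
  rw [← Matrix.mulVec_mulVec, dot_comm', dot_move]
  exact dot_comm' _ _

lemma dot_diag (d : Fin b → ℝ) (w : Fin b → ℝ) :
    dotProduct w (Matrix.diagonal d *ᵥ w) = ∑ k, d k * (w k)^2 := by
  unfold dotProduct
  congr 1
  funext k
  rw [Matrix.mulVec_diagonal]
  ring

/-- sandwich: `dot z ((C * diagonal d * Cᵀ) *ᵥ z) = ∑ k, d k * ((Cᵀ *ᵥ z) k)^2` -/
lemma dot_sandwich {c : ℕ} (C : Matrix (Fin c) (Fin b) ℝ) (d : Fin b → ℝ) (z : Fin c → ℝ) :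
    dotProduct z ((C * Matrix.diagonal d * Cᵀ) *ᵥ z)
      = ∑ k, d k * ((Cᵀ *ᵥ z) k)^2 := by
  rw [← Matrix.mulVec_mulVec, ← Matrix.mulVec_mulVec, dot_move, dot_diag]

/-- operator norm bound predicate -/
def opb (B : Matrix (Fin a) (Fin b) ℝ) (c : ℝ) : Prop :=
  0 ≤ c ∧ ∀ v : Fin b → ℝ,
    dotProduct (B *ᵥ v) (B *ᵥ v) ≤ c^2 * dotProduct v v

lemma opb.sqrt_le {B : Matrix (Fin a) (Fin b) ℝ} {c : ℝ} (h : opb B c) (v : Fin b → ℝ) :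
    Real.sqrt (dotProduct (B *ᵥ v) (B *ᵥ v)) ≤ c * Real.sqrt (dotProduct v v) := by
  have := Real.sqrt_le_sqrt (h.2 v)
  rwa [Real.sqrt_mul (sq_nonneg c), Real.sqrt_sq h.1] at this

lemma opb_transpose {B : Matrix (Fin a) (Fin b) ℝ} {c : ℝ} (h : opb B c) : opb Bᵀ c := by
  refine ⟨h.1, fun z => ?_⟩
  set w := Bᵀ *ᵥ z with hwdef
  have hww : dotProduct z (B *ᵥ w) = dotProduct w w := dot_move B z w
  have h2 : dotProduct w w ≤
      Real.sqrt (dotProduct z z) * Real.sqrt (dotProduct (B *ᵥ w) (B *ᵥ w)) :=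
    hww ▸ dot_cs z (B *ᵥ w)
  have h3 : Real.sqrt (dotProduct (B *ᵥ w) (B *ᵥ w)) ≤
      c * Real.sqrt (dotProduct w w) := h.sqrt_le w
  have hs : dotProduct w w = Real.sqrt (dotProduct w w) ^ 2 :=
    (Real.sq_sqrt (dot_self_nonneg w)).symm
  have ht : dotProduct z z = Real.sqrt (dotProduct z z) ^ 2 :=
    (Real.sq_sqrt (dot_self_nonneg z)).symm
  set s := Real.sqrt (dotProduct w w)
  set t := Real.sqrt (dotProduct z z)
  have hs0 : 0 ≤ s := Real.sqrt_nonneg _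
  have ht0 : 0 ≤ t := Real.sqrt_nonneg _
  have hB0 : 0 ≤ Real.sqrt (dotProduct (B *ᵥ w) (B *ᵥ w)) := Real.sqrt_nonneg _
  have hc : 0 ≤ c := h.1
  -- s^2 ≤ t * (c * s)
  have key : s^2 ≤ t * (c * s) := by
    rw [← hs]
    calc dotProduct w w ≤ t * Real.sqrt (dotProduct (B *ᵥ w) (B *ᵥ w)) := h2
      _ ≤ t * (c * s) := mul_le_mul_of_nonneg_left h3 ht0
  show dotProduct w w ≤ c^2 * dotProduct z z
  rw [hs, ht]
  nlinarith [sq_nonneg (s - c*t)]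

/-- σ₁ is an operator bound -/
lemma opb_svals_zero (B : Matrix (Fin a) (Fin b) ℝ) (hb : 0 < b) :
    opb B (svals B ⟨0, hb⟩) := by
  refine ⟨svals_zero_nonneg B hb, fun v => ?_⟩
  rw [dot_mulVec_self, spec, dot_sandwich]
  have hvv : dotProduct v v = ∑ k, ((UU B)ᵀ *ᵥ v) k ^ 2 := by
    have h1 : dotProduct v v = dotProduct v ((UU B * Matrix.diagonal
        (fun _ => (1:ℝ)) * (UU B)ᵀ) *ᵥ v) := by
      rw [Matrix.diagonal_one, Matrix.mul_one, UUt, Matrix.one_mulVec]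
    rw [h1, dot_sandwich]
    simp
  rw [hvv, Finset.mul_sum]
  apply Finset.sum_le_sum
  intro k _
  have h1 : eig B k ≤ (svals B ⟨0, hb⟩)^2 := by
    have h2 := svals_zero_ge B hb k
    have h3 : Real.sqrt (eig B k)^2 ≤ (svals B ⟨0, hb⟩)^2 :=
      pow_le_pow_left₀ (Real.sqrt_nonneg _) h2 2
    rwa [Real.sq_sqrt (eig_nonneg B k)] at h3
  exact mul_le_mul_of_nonneg_right h1 (sq_nonneg _)

/-- L1: duality bound -/
lemma ip_le_opb {B M : Matrix (Fin a) (Fin b) ℝ} {c : ℝ} (h : opb B c) :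
    ip B M ≤ c * nucNorm M := by
  have hstep : ip (B * UU M) (GG M) = ip B M := by
    rw [ip_mul_right, ← M_eq_G_Ut]
  rw [← hstep, ip_eq_sum, nucNorm_eq_sum_sqrt, Finset.mul_sum]
  apply Finset.sum_le_sum
  intro k _
  have h1 : ∑ i, (B * UU M) i k * GG M i k
      = dotProduct (B *ᵥ (fun r => UU M r k)) (fun i => GG M i k) := by
    unfold dotProduct Matrix.mulVec
    apply Finset.sum_congr rfl
    intro i _
    congr 1
  have hv1 : dotProduct (fun r => UU M r k) (fun r => UU M r k) = 1 := by
    have := congrArg (fun Z => Z k k) (UtU M)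
    simp only [Matrix.mul_apply, Matrix.transpose_apply, Matrix.one_apply_eq] at this
    exact this
  have hg : dotProduct (fun i => GG M i k) (fun i => GG M i k) = eig M k := by
    rw [← GtG_diag M k]
    unfold dotProduct
    exact Finset.sum_congr rfl fun i _ => (sq _).symm
  rw [h1]
  calc dotProduct (B *ᵥ (fun r => UU M r k)) (fun i => GG M i k)
      ≤ Real.sqrt (dotProduct (B *ᵥ (fun r => UU M r k)) (B *ᵥ (fun r => UU M r k)))
        * Real.sqrt (dotProduct (fun i => GG M i k) (fun i => GG M i k)) := dot_cs _ _
    _ ≤ (c * Real.sqrt (dotProduct (fun r => UU M r k) (fun r => UU M r k)))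
        * Real.sqrt (eig M k) := by
        rw [hg]
        exact mul_le_mul_of_nonneg_right (h.sqrt_le _) (Real.sqrt_nonneg _)
    _ = c * Real.sqrt (eig M k) := by rw [hv1]; simp

/-- diagonal weight functions -/
noncomputable def dhalfinv (M : Matrix (Fin a) (Fin b) ℝ) : Fin b → ℝ :=
  fun k => if 0 < eig M k then (Real.sqrt (eig M k))⁻¹ else 0
noncomputable def dind (M : Matrix (Fin a) (Fin b) ℝ) : Fin b → ℝ :=
  fun k => if 0 < eig M k then 1 else 0
noncomputable def dinv (M : Matrix (Fin a) (Fin b) ℝ) : Fin b → ℝ :=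
  fun k => if 0 < eig M k then (eig M k)⁻¹ else 0

noncomputable def sgn (M : Matrix (Fin a) (Fin b) ℝ) : Matrix (Fin a) (Fin b) ℝ :=
  GG M * Matrix.diagonal (dhalfinv M) * (UU M)ᵀ
noncomputable def rowProj (M : Matrix (Fin a) (Fin b) ℝ) : Matrix (Fin b) (Fin b) ℝ :=
  UU M * Matrix.diagonal (dind M) * (UU M)ᵀ
noncomputable def colProj (M : Matrix (Fin a) (Fin b) ℝ) : Matrix (Fin a) (Fin a) ℝ :=
  GG M * Matrix.diagonal (dinv M) * (GG M)ᵀ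

/-- normalization helpers -/
lemma Gmul (M : Matrix (Fin a) (Fin b) ℝ) {e : ℕ} (Z : Matrix (Fin b) (Fin e) ℝ) :
    (GG M)ᵀ * (GG M * Z) = Matrix.diagonal (eig M) * Z := by
  rw [← Matrix.mul_assoc, GtG]

lemma Umul (M : Matrix (Fin a) (Fin b) ℝ) {e : ℕ} (Z : Matrix (Fin b) (Fin e) ℝ) :
    (UU M)ᵀ * (UU M * Z) = Z := by
  rw [← Matrix.mul_assoc, UtU, Matrix.one_mul]

lemma UmulT (M : Matrix (Fin a) (Fin b) ℝ) {e : ℕ} (Z : Matrix (Fin b) (Fin e) ℝ) :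
    UU M * ((UU M)ᵀ * Z) = Z := by
  rw [← Matrix.mul_assoc, UUt, Matrix.one_mul]

lemma dmul (f g : Fin b → ℝ) {e : ℕ} (Z : Matrix (Fin b) (Fin e) ℝ) :
    Matrix.diagonal f * (Matrix.diagonal g * Z) = Matrix.diagonal (fun k => f k * g k) * Z := by
  rw [← Matrix.mul_assoc, Matrix.diagonal_mul_diagonal]

lemma Gdmul (M : Matrix (Fin a) (Fin b) ℝ) (f : Fin b → ℝ) (hf : ∀ k, 0 < eig M k → f k = 1)
    {e : ℕ} (Z : Matrix (Fin b) (Fin e) ℝ) :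
    GG M * (Matrix.diagonal f * Z) = GG M * Z := by
  rw [← Matrix.mul_assoc, G_mul_ind M f hf]

lemma sgn_transpose (M : Matrix (Fin a) (Fin b) ℝ) :
    (sgn M)ᵀ = UU M * Matrix.diagonal (dhalfinv M) * (GG M)ᵀ := by
  unfold sgn
  simp [Matrix.transpose_mul, Matrix.diagonal_transpose, Matrix.mul_assoc]

lemma diag_ext {e : ℕ} {f g : Fin e → ℝ} (h : ∀ k, f k = g k) :
    Matrix.diagonal f = Matrix.diagonal g := by
  have : f = g := funext h
  rw [this]

lemma sgnT_sgn (M : Matrix (Fin a) (Fin b) ℝ) : (sgn M)ᵀ * sgn M = rowProj M := by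
  rw [sgn_transpose]
  unfold sgn rowProj
  simp only [Matrix.mul_assoc]
  rw [Gmul, dmul, dmul]
  refine congrArg (fun D => UU M * (D * (UU M)ᵀ)) (diag_ext fun k => ?_)
  by_cases h : 0 < eig M k
  · simp only [dhalfinv, dind, if_pos h]
    set s := Real.sqrt (eig M k) with hs
    have he : eig M k = s * s := (Real.mul_self_sqrt h.le).symm
    have hs0 : s ≠ 0 := ne_of_gt (Real.sqrt_pos.mpr h)
    rw [he]
    field_simp
  · simp only [dhalfinv, dind, if_neg h]
    ring

lemma sum_Ut_sq (M : Matrix (Fin a) (Fin b) ℝ) (v : Fin b → ℝ) :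
    ∑ k, (((UU M)ᵀ *ᵥ v) k)^2 = dotProduct v v := by
  have h1 : dotProduct v v = dotProduct v ((UU M * Matrix.diagonal
      (fun _ => (1:ℝ)) * (UU M)ᵀ) *ᵥ v) := by
    rw [Matrix.diagonal_one, Matrix.mul_one, UUt, Matrix.one_mulVec]
  rw [h1, dot_sandwich]
  simp

lemma dot_rowProj_le (M : Matrix (Fin a) (Fin b) ℝ) (v : Fin b → ℝ) :
    dotProduct v (rowProj M *ᵥ v) ≤ dotProduct v v := by
  unfold rowProj
  rw [dot_sandwich, ← sum_Ut_sq M v]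
  apply Finset.sum_le_sum
  intro k _
  unfold dind
  by_cases h : 0 < eig M k
  · simp [if_pos h]
  · simp [if_neg h, sq_nonneg]

lemma dot_rowProj_nonneg (M : Matrix (Fin a) (Fin b) ℝ) (v : Fin b → ℝ) :
    0 ≤ dotProduct v (rowProj M *ᵥ v) := by
  unfold rowProj
  rw [dot_sandwich]
  apply Finset.sum_nonneg
  intro k _
  unfold dind
  by_cases h : 0 < eig M k
  · simp [if_pos h, sq_nonneg]
  · simp [if_neg h]

lemma opb_sgn (M : Matrix (Fin a) (Fin b) ℝ) : opb (sgn M) 1 := by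
  refine ⟨zero_le_one, fun v => ?_⟩
  rw [dot_mulVec_self, sgnT_sgn, one_pow, one_mul]
  exact dot_rowProj_le M v

lemma ip_diag {e : ℕ} (f g : Fin e → ℝ) :
    ip (Matrix.diagonal f) (Matrix.diagonal g) = ∑ k, f k * g k := by
  rw [ip_eq_sum]
  apply Finset.sum_congr rfl
  intro j _
  rw [Finset.sum_eq_single j]
  · simp
  · intro i _ hij
    rw [Matrix.diagonal_apply_ne f hij, zero_mul]
  · intro h; exact absurd (Finset.mem_univ j) h

lemma Gt_M_U (M : Matrix (Fin a) (Fin b) ℝ) :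
    (GG M)ᵀ * M * UU M = Matrix.diagonal (eig M) := by
  rw [Matrix.mul_assoc]
  exact GtG M

lemma ip_sgn_self (M : Matrix (Fin a) (Fin b) ℝ) : ip (sgn M) M = nucNorm M := by
  unfold sgn
  rw [ip_conj, Matrix.transpose_transpose]
  have h1 : (GG M)ᵀ * M * UU M = Matrix.diagonal (eig M) := Gt_M_U M
  rw [h1, ip_diag, nucNorm_eq_sum_sqrt]
  apply Finset.sum_congr rfl
  intro k _
  by_cases h : 0 < eig M k
  · simp only [dhalfinv, if_pos h]
    set s := Real.sqrt (eig M k) with hs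
    have he : eig M k = s * s := (Real.mul_self_sqrt h.le).symm
    have hs0 : s ≠ 0 := ne_of_gt (Real.sqrt_pos.mpr h)
    rw [he]
    field_simp
  · simp only [dhalfinv, if_neg h]
    have h0 : eig M k = 0 := le_antisymm (not_lt.mp h) (eig_nonneg M k)
    rw [h0]
    simp

lemma rowProj_transpose (M : Matrix (Fin a) (Fin b) ℝ) : (rowProj M)ᵀ = rowProj M := by
  unfold rowProj
  simp [Matrix.transpose_mul, Matrix.diagonal_transpose, Matrix.mul_assoc]

lemma colProj_transpose (M : Matrix (Fin a) (Fin b) ℝ) : (colProj M)ᵀ = colProj M := by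
  unfold colProj
  simp [Matrix.transpose_mul, Matrix.diagonal_transpose, Matrix.mul_assoc]

lemma M_mul_rowProj (M : Matrix (Fin a) (Fin b) ℝ) : M * rowProj M = M := by
  unfold rowProj
  calc M * (UU M * Matrix.diagonal (dind M) * (UU M)ᵀ)
      = (M * UU M) * (Matrix.diagonal (dind M) * (UU M)ᵀ) := by
        simp only [Matrix.mul_assoc]
    _ = GG M * (Matrix.diagonal (dind M) * (UU M)ᵀ) := rfl
    _ = GG M * (UU M)ᵀ := Gdmul M (dind M) (fun k hk => by simp only [dind, if_pos hk]) _
    _ = M := (M_eq_G_Ut M).symm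

lemma rowProj_idem (M : Matrix (Fin a) (Fin b) ℝ) : rowProj M * rowProj M = rowProj M := by
  unfold rowProj
  simp only [Matrix.mul_assoc]
  rw [Umul, dmul]
  refine congrArg (fun D => UU M * (D * (UU M)ᵀ)) (diag_ext fun k => ?_)
  by_cases h : 0 < eig M k <;> simp [dind, h]

lemma GtM (M : Matrix (Fin a) (Fin b) ℝ) :
    (GG M)ᵀ * M = Matrix.diagonal (eig M) * (UU M)ᵀ := by
  calc (GG M)ᵀ * M = (GG M)ᵀ * (GG M * (UU M)ᵀ) := by rw [← M_eq_G_Ut]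
    _ = Matrix.diagonal (eig M) * (UU M)ᵀ := Gmul M _

lemma colProj_mul_M (M : Matrix (Fin a) (Fin b) ℝ) : colProj M * M = M := by
  unfold colProj
  simp only [Matrix.mul_assoc]
  rw [GtM, dmul]
  rw [Gdmul M _ (fun k hk => by
    simp only [dinv, if_pos hk]
    exact inv_mul_cancel₀ (ne_of_gt hk))]
  exact (M_eq_G_Ut M).symm

lemma colProj_idem (M : Matrix (Fin a) (Fin b) ℝ) : colProj M * colProj M = colProj M := by
  unfold colProj
  simp only [Matrix.mul_assoc]
  rw [Gmul, dmul, dmul]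
  refine congrArg (fun D => GG M * (D * (GG M)ᵀ)) (diag_ext fun k => ?_)
  by_cases h : 0 < eig M k
  · simp only [dinv, if_pos h]
    field_simp
  · simp only [dinv, if_neg h]
    ring

lemma dot_colProj_nonneg (M : Matrix (Fin a) (Fin b) ℝ) (z : Fin a → ℝ) :
    0 ≤ dotProduct z (colProj M *ᵥ z) := by
  unfold colProj
  rw [dot_sandwich]
  apply Finset.sum_nonneg
  intro k _
  unfold dinv
  by_cases h : 0 < eig M k
  · have : 0 ≤ (eig M k)⁻¹ := le_of_lt (inv_pos.mpr h)
    simp only [if_pos h]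
    positivity
  · simp [if_neg h]

lemma ip_move_second {u w e : ℕ} (C : Matrix (Fin u) (Fin w) ℝ) (Z : Matrix (Fin u) (Fin e) ℝ)
    (Y : Matrix (Fin w) (Fin e) ℝ) : ip Z (C * Y) = ip (Cᵀ * Z) Y := by
  rw [ip_mul_left, Matrix.transpose_transpose]

lemma ip_diag_left {w e : ℕ} (d : Fin w → ℝ) (W : Matrix (Fin w) (Fin e) ℝ) :
    ip W (Matrix.diagonal d * W) = ∑ k, d k * ∑ j, (W k j)^2 := by
  rw [ip_eq_sum, Finset.sum_comm]
  apply Finset.sum_congr rfl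
  intro k _
  rw [Finset.mul_sum]
  apply Finset.sum_congr rfl
  intro j _
  rw [Matrix.diagonal_mul]
  ring

lemma ip_sandwich {u w e : ℕ} (C : Matrix (Fin u) (Fin w) ℝ) (d : Fin w → ℝ)
    (Z : Matrix (Fin u) (Fin e) ℝ) :
    ip Z ((C * Matrix.diagonal d * Cᵀ) * Z) = ∑ k, d k * ∑ j, ((Cᵀ * Z) k j)^2 := by
  have h1 : (C * Matrix.diagonal d * Cᵀ) * Z = C * (Matrix.diagonal d * (Cᵀ * Z)) := by
    simp only [Matrix.mul_assoc]
  rw [h1, ip_move_second, ip_diag_left]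

/-- self inner product via AᵀA -/
lemma ip_mulmul {u w e : ℕ} (C : Matrix (Fin u) (Fin w) ℝ) (Z : Matrix (Fin w) (Fin e) ℝ) :
    ip (C * Z) (C * Z) = ip Z ((Cᵀ * C) * Z) := by
  rw [ip_mul_left, Matrix.mul_assoc]

/-- restricted eigenvalue bound -/
lemma proj_le_mu {nn pp e : ℕ} (X : Matrix (Fin nn) (Fin pp) ℝ) (μ : ℝ)
    (hev : ∀ k, 0 < eig X k → 1 ≤ μ^2 * eig X k) (Z : Matrix (Fin pp) (Fin e) ℝ) :
    ip (rowProj X * Z) (rowProj X * Z) ≤ μ^2 * ip (X * Z) (X * Z) := by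
  have h1 : ip (rowProj X * Z) (rowProj X * Z) = ip Z (rowProj X * Z) := by
    rw [ip_mulmul, rowProj_transpose, rowProj_idem]
  have h2 : ip Z (rowProj X * Z) = ∑ k, dind X k * ∑ j, (((UU X)ᵀ * Z) k j)^2 := by
    unfold rowProj
    rw [ip_sandwich]
  have h3 : ip (X * Z) (X * Z) = ∑ k, eig X k * ∑ j, (((UU X)ᵀ * Z) k j)^2 := by
    rw [ip_mulmul, spec, ip_sandwich]
  rw [h1, h2, h3, Finset.mul_sum]
  apply Finset.sum_le_sum
  intro k _
  have hS : 0 ≤ ∑ j, (((UU X)ᵀ * Z) k j)^2 := Finset.sum_nonneg fun j _ => sq_nonneg _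
  by_cases h : 0 < eig X k
  · simp only [dind, if_pos h]
    calc 1 * ∑ j, (((UU X)ᵀ * Z) k j)^2 = 1 * ∑ j, (((UU X)ᵀ * Z) k j)^2 := rfl
      _ ≤ (μ^2 * eig X k) * ∑ j, (((UU X)ᵀ * Z) k j)^2 :=
          mul_le_mul_of_nonneg_right (hev k h) hS
      _ = μ^2 * (eig X k * ∑ j, (((UU X)ᵀ * Z) k j)^2) := by ring
  · simp only [dind, if_neg h]
    have : 0 ≤ eig X k := eig_nonneg X k
    have : 0 ≤ μ^2 * (eig X k * ∑ j, (((UU X)ᵀ * Z) k j)^2) := by positivity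
    linarith

/-- number of nonzero eigenvalues equals the rank -/
lemma card_ne_eig_eq_rank (M : Matrix (Fin a) (Fin b) ℝ) :
    (Finset.univ.filter (fun k => eig M k ≠ 0)).card = M.rank := by
  have h1 : (Mᴴ * M).rank = Fintype.card {i // eig M i ≠ 0} :=
    (Matrix.isHermitian_conjTranspose_mul_self M).rank_eq_card_non_zero_eigs
  have h2 : (Mᴴ * M).rank = M.rank := by
    rw [conjT_eq, Matrix.rank_transpose_mul_self]
  rw [← h2, h1, Fintype.card_subtype]

lemma card_pos_eig_eq_rank (M : Matrix (Fin a) (Fin b) ℝ) :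
    (Finset.univ.filter (fun k => 0 < eig M k)).card = M.rank := by
  rw [← card_ne_eig_eq_rank]
  congr 1
  apply Finset.filter_congr
  intro k _
  constructor
  · intro h; exact ne_of_gt h
  · intro h; exact lt_of_le_of_ne (eig_nonneg M k) (Ne.symm h)

/-- the (rank-1)-indexed sorted singular value is a lower bound for √(positive eigenvalues) -/
lemma svals_rank_le {nn pp : ℕ} (X : Matrix (Fin nn) (Fin pp) ℝ) (hq : 0 < X.rank)
    (hlt : X.rank - 1 < pp) (j : Fin pp) (hj : 0 < eig X j) :
    svals X ⟨X.rank - 1, hlt⟩ ≤ Real.sqrt (eig X j) := by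
  by_contra hcon
  push_neg at hcon
  set q := X.rank with hqdef
  -- hcon : √(eig X j) < svals X ⟨q-1⟩ = √(eig X (σ ⟨q-1⟩))
  rw [svals_eq] at hcon
  have hmono := Tuple.monotone_sort (negSvalsUnsorted X)
  -- the image of Iic ⟨q-1⟩ under σ consists of indices with eig > √eig j ≥ 0
  set S : Finset (Fin pp) := (Finset.Iic (⟨q - 1, hlt⟩ : Fin pp)).image (Tuple.sort (negSvalsUnsorted X)) with hS
  have hcardS : S.card = q := by
    rw [hS, Finset.card_image_of_injective _ (Tuple.sort (negSvalsUnsorted X)).injective, Fin.card_Iic]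
    simp only []
    omega
  have hmem : ∀ k ∈ Finset.Iic (⟨q - 1, hlt⟩ : Fin pp),
      Real.sqrt (eig X j) < Real.sqrt (eig X (Tuple.sort (negSvalsUnsorted X) k)) := by
    intro k hk
    have hk' : k ≤ (⟨q - 1, hlt⟩ : Fin pp) := Finset.mem_Iic.mp hk
    have := hmono hk'
    simp only [Function.comp_apply] at this
    rw [negSvals_eq, negSvals_eq] at this
    -- this : -√eig(σ k) ≤ -√eig(σ ⟨q-1⟩)
    calc Real.sqrt (eig X j)
        < Real.sqrt (eig X (Tuple.sort (negSvalsUnsorted X) ⟨q - 1, hlt⟩)) := hcon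
      _ ≤ Real.sqrt (eig X (Tuple.sort (negSvalsUnsorted X) k)) := by linarith
  have hsub : insert j S ⊆ Finset.univ.filter (fun k => 0 < eig X k) := by
    intro x hx
    rcases Finset.mem_insert.mp hx with hx | hx
    · subst hx
      exact Finset.mem_filter.mpr ⟨Finset.mem_univ _, hj⟩
    · rw [hS] at hx
      rcases Finset.mem_image.mp hx with ⟨k, hk, hkx⟩
      have := hmem k hk
      rw [hkx] at this
      refine Finset.mem_filter.mpr ⟨Finset.mem_univ _, ?_⟩
      by_contra hx0
      push_neg at hx0
      have h0 : eig X x = 0 := le_antisymm hx0 (eig_nonneg X x)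
      rw [h0, Real.sqrt_zero] at this
      exact absurd this (not_lt.mpr (Real.sqrt_nonneg _))
  have hjS : j ∉ S := by
    rw [hS]
    intro hjmem
    rcases Finset.mem_image.mp hjmem with ⟨k, hk, hkx⟩
    have := hmem k hk
    rw [hkx] at this
    exact absurd this (lt_irrefl _)
  have hcard : (insert j S).card = q + 1 := by
    rw [Finset.card_insert_of_notMem hjS, hcardS]
  have hle := Finset.card_le_card hsub
  rw [hcard, card_pos_eig_eq_rank] at hle
  omega

/-- t → 0 limit argument -/
lemma nonneg_of_forall_t {s c : ℝ} (hc : 0 ≤ c)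
    (h : ∀ t : ℝ, 0 < t → t ≤ 1 → 0 ≤ t * s + t^2 * c) : 0 ≤ s := by
  by_contra hs
  push_neg at hs
  set t : ℝ := min 1 (-s / (c + 1)) with ht
  have hc1 : (0:ℝ) < c + 1 := by linarith
  have ht1 : t ≤ 1 := min_le_left _ _
  have ht2 : t ≤ -s / (c + 1) := min_le_right _ _
  have ht0 : 0 < t := lt_min one_pos (div_pos (by linarith) hc1)
  have := h t ht0 ht1
  -- 0 ≤ t*s + t²c = t(s + t*c) and s + t*c < 0
  have hkey : s + t * c < 0 := by
    have h1 : t * c ≤ (-s / (c + 1)) * c := mul_le_mul_of_nonneg_right ht2 hc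
    have h2 : (-s / (c + 1)) * c < -s := by
      rw [div_mul_eq_mul_div, div_lt_iff₀ hc1]
      nlinarith
    linarith
  nlinarith

/-- convexity of the nuclear norm -/
lemma nucNorm_combo (M N : Matrix (Fin a) (Fin b) ℝ) (t : ℝ) (h0 : 0 ≤ t) (h1 : t ≤ 1) :
    nucNorm ((1-t) • M + t • N) ≤ (1-t) * nucNorm M + t * nucNorm N := by
  set Z := (1-t) • M + t • N with hZ
  have h2 : nucNorm Z = ip (sgn Z) Z := (ip_sgn_self Z).symm
  rw [h2, hZ, ip_add_right, ip_smul_right, ip_smul_right]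
  have h3 : ip (sgn Z) M ≤ nucNorm M := by
    have := ip_le_opb (M := M) (opb_sgn Z)
    simpa using this
  have h4 : ip (sgn Z) N ≤ nucNorm N := by
    have := ip_le_opb (M := N) (opb_sgn Z)
    simpa using this
  have h5 : 0 ≤ 1 - t := by linarith
  have h6 := mul_le_mul_of_nonneg_left h3 h5
  have h7 := mul_le_mul_of_nonneg_left h4 h0
  linarith

end OracleAux

set_option maxHeartbeats 1000000

namespace OracleAux

variable {a b : ℕ}

lemma ip_zero_right (M : Matrix (Fin a) (Fin b) ℝ) : ip M 0 = 0 := by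
  rw [ip, Matrix.mul_zero, Matrix.trace_zero]

lemma ip_transpose {e : ℕ} (M N : Matrix (Fin a) (Fin e) ℝ) : ip Mᵀ Nᵀ = ip M N := by
  rw [ip, ip, Matrix.transpose_transpose, Matrix.trace_mul_comm,
    ← Matrix.trace_transpose (Mᵀ * N), Matrix.transpose_mul, Matrix.transpose_transpose]

lemma polar (U V : Matrix (Fin a) (Fin b) ℝ) :
    2 * ip U V = ip U U + ip V V - ip (U - V) (U - V) := by
  rw [ip_sub_left, ip_sub_right, ip_sub_right, ip_comm V U]
  ring

lemma expand2 (U V : Matrix (Fin a) (Fin b) ℝ) (t : ℝ) :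
    ip (U + t • V) (U + t • V) = ip U U + 2*t*ip U V + t^2 * ip V V := by
  rw [ip_add_left, ip_add_right, ip_add_right, ip_smul_left, ip_smul_left, ip_smul_right,
    ip_smul_right, ip_comm V U]
  ring

lemma expand_add {a b : ℕ} (U V : Matrix (Fin a) (Fin b) ℝ) :
    ip (U + V) (U + V) = ip U U + 2 * ip U V + ip V V := by
  rw [ip_add_left, ip_add_right, ip_add_right, ip_comm V U]
  ring

lemma ip_symIdem_nonneg {e : ℕ} (S : Matrix (Fin a) (Fin a) ℝ) (hs : Sᵀ = S)
    (hi : S * S = S) (Z : Matrix (Fin a) (Fin e) ℝ) : 0 ≤ ip Z (S * Z) := by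
  have h : ip (S * Z) (S * Z) = ip Z (S * Z) := by
    rw [ip_mulmul, hs, hi]
  rw [← h]
  exact ip_self_nonneg _

lemma U_col_unit (M : Matrix (Fin a) (Fin b) ℝ) (k : Fin b) :
    dotProduct (fun r => UU M r k) (fun r => UU M r k) = 1 := by
  have := congrArg (fun Z => Z k k) (UtU M)
  simp only [Matrix.mul_apply, Matrix.transpose_apply, Matrix.one_apply_eq] at this
  exact this

lemma trace_rowProj (M : Matrix (Fin a) (Fin b) ℝ) :
    (rowProj M).trace = ((M.rank : ℝ)) := by
  unfold rowProj
  rw [Matrix.trace_mul_cycle, Matrix.mul_assoc, Umul]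
  rw [Matrix.trace_diagonal]
  have h1 : ∑ k, dind M k = ((Finset.univ.filter (fun k => 0 < eig M k)).card : ℝ) := by
    unfold dind
    rw [Finset.sum_boole]
  rw [h1, card_pos_eig_eq_rank]

lemma final_arith {aa bb dd rr μ lam rkA' rkA : ℝ} (hdd0 : 0 ≤ dd) (hrr0 : 0 ≤ rr)
    (hrr2 : rr^2 = rkA') (hrank : rkA' ≤ rkA) (hμ : 0 < μ) (hlam0 : 0 ≤ lam)
    (hstep2 : aa^2 + dd^2 ≤ bb^2 + Real.sqrt 2 * lam * (rr * (μ * dd))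
      + lam * (rr * (μ * dd))) :
    aa^2 ≤ bb^2 + (3/2) * μ^2 * lam^2 * rkA := by
  have h2s : (0:ℝ) ≤ Real.sqrt 2 := Real.sqrt_nonneg 2
  have hs2 : Real.sqrt 2 ^ 2 = 2 := Real.sq_sqrt (by norm_num)
  have hs2le : Real.sqrt 2 ≤ 3/2 := by nlinarith [hs2, h2s]
  set K := (1 + Real.sqrt 2) * lam * (rr * μ) with hKdef
  have step3 : aa^2 ≤ bb^2 + K^2/4 := by
    nlinarith [hstep2, sq_nonneg (dd - K/2)]
  have hcoefb : (1 + Real.sqrt 2)^2 ≤ 6 := by nlinarith [hs2, hs2le]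
  have hZ'0 : (0:ℝ) ≤ lam^2 * μ^2 * rkA' := by
    rw [← hrr2]
    positivity
  have h6 : (1 + Real.sqrt 2)^2 * (lam^2 * μ^2 * rkA') ≤ 6 * (lam^2 * μ^2 * rkA') :=
    mul_le_mul_of_nonneg_right hcoefb hZ'0
  have hZ : lam^2 * μ^2 * rkA' ≤ lam^2 * μ^2 * rkA :=
    mul_le_mul_of_nonneg_left hrank (by positivity)
  have hKexp : K^2 = (1 + Real.sqrt 2)^2 * (lam^2 * μ^2 * rkA') := by
    rw [← hrr2, hKdef]
    ring
  nlinarith [step3, h6, hZ, hKexp]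

/-- master per-A bound -/
lemma master {n p T : ℕ} (hT : 0 < T)
    (X : Matrix (Fin n) (Fin p) ℝ) (A₀ : Matrix (Fin p) (Fin T) ℝ)
    (E Y : Matrix (Fin n) (Fin T) ℝ) (hY : Y = X * A₀ + E)
    (μ : ℝ) (hμ : 0 < μ) (hq : 0 < X.rank) (hp : X.rank - 1 < p)
    (hsv : 1 / μ ≤ svals X ⟨X.rank - 1, hp⟩)
    (lam : ℝ) (hlam : 2 * svals (Xᵀ * E) ⟨0, hT⟩ ≤ lam)
    (Ahat : Matrix (Fin p) (Fin T) ℝ)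
    (hmin : ∀ A : Matrix (Fin p) (Fin T) ℝ,
      frobNorm (Y - X * Ahat) ^ 2 + lam * nucNorm Ahat ≤
        frobNorm (Y - X * A) ^ 2 + lam * nucNorm A)
    (A : Matrix (Fin p) (Fin T) ℝ) :
    frobNorm (X * Ahat - X * A₀) ^ 2 ≤
      frobNorm (X * A - X * A₀) ^ 2 + (3 / 2) * μ ^ 2 * lam ^ 2 * A.rank := by
  -- notation
  set Pi := rowProj X with hPidef
  set A' := Pi * A with hA'def
  set Δ := Ahat - A' with hΔdef
  set B := Xᵀ * E with hBdef
  set σ₁ := svals B ⟨0, hT⟩ with hσdef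
  have hopbB : opb B σ₁ := opb_svals_zero B hT
  have hσ1 : 0 ≤ σ₁ := hopbB.1
  have hlam0 : 0 ≤ lam := le_trans (by linarith) hlam
  -- restricted eigenvalue hypothesis
  have hev : ∀ k, 0 < eig X k → 1 ≤ μ^2 * eig X k := by
    intro k hk
    have h1 : 1/μ ≤ Real.sqrt (eig X k) :=
      le_trans hsv (svals_rank_le X hq hp k hk)
    have h2 : (1/μ)^2 ≤ eig X k := by
      have h3 : (1/μ)^2 ≤ Real.sqrt (eig X k)^2 := by
        apply sq_le_sq'
        · have : 0 < 1/μ := by positivity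
          linarith [Real.sqrt_nonneg (eig X k)]
        · exact h1
      rwa [Real.sq_sqrt (eig_nonneg X k)] at h3
    have hμ2 : 0 < μ^2 := by positivity
    have h4 := mul_le_mul_of_nonneg_left h2 (le_of_lt hμ2)
    have h5 : μ^2 * ((1/μ)^2) = 1 := by field_simp
    linarith
  -- projections
  have hPisym : Piᵀ = Pi := rowProj_transpose X
  have hPiidem : Pi * Pi = Pi := rowProj_idem X
  have hXPi : X * Pi = X := M_mul_rowProj X
  have hXA' : X * A' = X * A := by
    rw [hA'def, ← Matrix.mul_assoc, hXPi]
  have hPiA' : Pi * A' = A' := by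
    rw [hA'def, ← Matrix.mul_assoc, hPiidem]
  have hPiXt : Pi * Xᵀ = Xᵀ := by
    have h := congrArg Matrix.transpose hXPi
    rwa [Matrix.transpose_mul, hPisym] at h
  have hPiB : Pi * B = B := by
    rw [hBdef, ← Matrix.mul_assoc, hPiXt]
  set P := colProj A' with hPdef
  set Qm := rowProj A' with hQdef
  have hPsym : Pᵀ = P := colProj_transpose A'
  have hQsym : Qmᵀ = Qm := rowProj_transpose A'
  have hPidem : P * P = P := colProj_idem A'
  have hQidem : Qm * Qm = Qm := rowProj_idem A'
  have hPA' : P * A' = A' := colProj_mul_M A'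
  have hA'Q : A' * Qm = A' := M_mul_rowProj A'
  have hPiG : Pi * GG A' = GG A' := by
    show Pi * (A' * UU A') = A' * UU A'
    rw [← Matrix.mul_assoc, hPiA']
  have hPiP : Pi * P = P := by
    rw [hPdef]
    show Pi * (GG A' * Matrix.diagonal (dinv A') * (GG A')ᵀ) = _
    rw [← Matrix.mul_assoc, ← Matrix.mul_assoc, hPiG]
    rfl
  have hPPi : P * Pi = P := by
    have h := congrArg Matrix.transpose hPiP
    rwa [Matrix.transpose_mul, hPisym, hPsym] at h
  set R := Pi - P with hRdef
  have hRsym : Rᵀ = R := by rw [hRdef, Matrix.transpose_sub, hPisym, hPsym]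
  have hRidem : R * R = R := by
    rw [hRdef, Matrix.sub_mul, Matrix.mul_sub, Matrix.mul_sub, hPiidem, hPiP, hPPi, hPidem]
    abel
  have hPR : P * R = 0 := by
    rw [hRdef, Matrix.mul_sub, hPPi, hPidem, sub_self]
  have hRP : R * P = 0 := by
    rw [hRdef, Matrix.sub_mul, hPiP, hPidem, sub_self]
  have hRA' : R * A' = 0 := by
    rw [hRdef, Matrix.sub_mul, hPiA', hPA', sub_self]
  have hRG : R * GG A' = 0 := by
    show R * (A' * UU A') = 0
    rw [← Matrix.mul_assoc, hRA', Matrix.zero_mul]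
  have hGtR : (GG A')ᵀ * R = 0 := by
    have h := congrArg Matrix.transpose hRG
    rwa [Matrix.transpose_mul, hRsym, Matrix.transpose_zero] at h
  -- main objects
  set Nm := R * Δ * (1 - Qm) with hNdef
  set Γ := P * Δ + R * Δ * Qm with hΓdef
  set Sg := sgn A' with hSgdef
  set W := R * sgn Nm * (1 - Qm) with hWdef
  set V := Sg + W with hVdef
  have hsum : Γ + Nm = Pi * Δ := by
    calc Γ + Nm = P * Δ + R * Δ * Qm + (R * Δ - R * Δ * Qm) := by
          rw [hΓdef, hNdef, Matrix.mul_sub (R * Δ) 1 Qm, Matrix.mul_one]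
      _ = P * Δ + R * Δ := by abel
      _ = (P + R) * Δ := by rw [Matrix.add_mul]
      _ = Pi * Δ := by
          have h : P + R = Pi := by rw [hRdef]; abel
          rw [h]
  -- directional optimality
  have hdir : 0 ≤ 2 * ip (Y - X*Ahat) (X*Ahat - X*A') + lam * (nucNorm A' - nucNorm Ahat) := by
    apply nonneg_of_forall_t (ip_self_nonneg (X*Ahat - X*A'))
    intro t ht0 ht1
    have hAt := hmin ((1-t) • Ahat + t • A')
    have hXAt : X * ((1-t) • Ahat + t • A') = (1-t) • (X*Ahat) + t • (X*A') := by
      rw [Matrix.mul_add, Matrix.mul_smul, Matrix.mul_smul]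
    have hYm : Y - X * ((1-t) • Ahat + t • A')
        = (Y - X*Ahat) + t • (X*Ahat - X*A') := by
      rw [hXAt]
      ext i j
      simp only [Matrix.sub_apply, Matrix.add_apply, Matrix.smul_apply, smul_eq_mul]
      ring
    have hfrobt : frobNorm (Y - X*((1-t) • Ahat + t • A'))^2
        = frobNorm (Y - X*Ahat)^2 + 2*t*ip (Y - X*Ahat) (X*Ahat - X*A')
          + t^2 * ip (X*Ahat - X*A') (X*Ahat - X*A') := by
      rw [hYm, frobNorm_sq, frobNorm_sq, expand2]
    have hnuc := nucNorm_combo Ahat A' t (le_of_lt ht0) ht1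
    have hnuc' : lam * nucNorm ((1-t) • Ahat + t • A')
        ≤ lam * ((1-t) * nucNorm Ahat + t * nucNorm A') :=
      mul_le_mul_of_nonneg_left hnuc hlam0
    linarith [hAt, hfrobt, hnuc']
  -- rewrite hdir
  have hYsub : Y - X*Ahat = E - (X*Ahat - X*A₀) := by
    rw [hY]
    ext i j
    simp only [Matrix.sub_apply, Matrix.add_apply]
    ring
  have hXΔ : X*Ahat - X*A' = X * Δ := by
    rw [hΔdef, Matrix.mul_sub]
  have hipE : ip E (X*Ahat - X*A') = ip B Δ := by
    rw [hXΔ, ip_EX, ← hBdef]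
  have hUV : (X*Ahat - X*A₀) - (X*Ahat - X*A') = X*A - X*A₀ := by
    rw [hXA']
    ext i j
    simp only [Matrix.sub_apply]
    ring
  have hpolar := polar (X*Ahat - X*A₀) (X*Ahat - X*A')
  rw [hUV] at hpolar
  have key1 : ip (X*Ahat - X*A₀) (X*Ahat - X*A₀) + ip (X*Ahat - X*A') (X*Ahat - X*A')
      - ip (X*A - X*A₀) (X*A - X*A₀) - 2 * ip B Δ
      ≤ lam * (nucNorm A' - nucNorm Ahat) := by
    rw [hYsub] at hdir
    rw [ip_sub_left, hipE] at hdir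
    linarith [hdir, hpolar]
  -- opb V 1
  have hSgW : Sgᵀ * W = 0 := by
    rw [hSgdef, hWdef, sgn_transpose]
    simp only [Matrix.mul_assoc]
    rw [← Matrix.mul_assoc (GG A')ᵀ R, hGtR, Matrix.zero_mul, Matrix.mul_zero, Matrix.mul_zero]
  have hWSg : Wᵀ * Sg = 0 := by
    have h := congrArg Matrix.transpose hSgW
    rwa [Matrix.transpose_mul, Matrix.transpose_transpose, Matrix.transpose_zero] at h
  have hopbV : opb V 1 := by
    refine ⟨zero_le_one, fun v => ?_⟩
    rw [dot_mulVec_self]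
    have hVtV : Vᵀ * V = Sgᵀ * Sg + Wᵀ * W := by
      rw [hVdef, Matrix.transpose_add, Matrix.add_mul, Matrix.mul_add, Matrix.mul_add,
        hSgW, hWSg]
      simp
    rw [hVtV, Matrix.add_mulVec, dotProduct_add, sgnT_sgn]
    have hW2 : dotProduct v ((Wᵀ * W) *ᵥ v)
        ≤ dotProduct v v - dotProduct v (rowProj A' *ᵥ v) := by
      rw [← dot_mulVec_self]
      have hWv : W *ᵥ v = R *ᵥ (sgn Nm *ᵥ ((1 - Qm) *ᵥ v)) := by
        rw [hWdef, ← Matrix.mulVec_mulVec, ← Matrix.mulVec_mulVec]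
      rw [hWv]
      set y := sgn Nm *ᵥ ((1 - Qm) *ᵥ v) with hydef
      set z := (1 - Qm) *ᵥ v with hzdef
      have h1 : dotProduct (R *ᵥ y) (R *ᵥ y) = dotProduct y (R *ᵥ y) := by
        rw [dot_mulVec_self, hRsym, hRidem]
      have h2 : dotProduct y (R *ᵥ y) ≤ dotProduct y y := by
        rw [hRdef, Matrix.sub_mulVec, dotProduct_sub]
        have hy1 : dotProduct y (Pi *ᵥ y) ≤ dotProduct y y := by
          have h := dot_rowProj_le X y
          rwa [← hPidef] at h
        have hy2 : 0 ≤ dotProduct y (P *ᵥ y) := by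
          have h := dot_colProj_nonneg A' y
          rwa [← hPdef] at h
        linarith
      have h3 : dotProduct y y ≤ 1^2 * dotProduct z z := (opb_sgn Nm).2 z
      have h4 : dotProduct z z
          = dotProduct v v - dotProduct v (rowProj A' *ᵥ v) := by
        rw [hzdef, dot_mulVec_self]
        have h5 : (1 - Qm)ᵀ * (1 - Qm) = 1 - Qm := by
          rw [Matrix.transpose_sub, Matrix.transpose_one, hQsym, Matrix.mul_sub,
            Matrix.sub_mul, Matrix.sub_mul, hQidem]
          simp
        rw [h5, Matrix.sub_mulVec, dotProduct_sub, Matrix.one_mulVec, hQdef]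
      linarith
    have hQle := dot_rowProj_nonneg A' v
    rw [one_pow, one_mul]
    linarith
  -- nuclear norm comparison
  have hVAhat : ip V Ahat ≤ nucNorm Ahat := by
    have := ip_le_opb (M := Ahat) hopbV
    simpa using this
  have hWA' : ip W A' = 0 := by
    rw [hWdef, ip_conj, hRsym]
    have h1 : R * A' * (1 - Qm)ᵀ = 0 := by
      rw [hRA', Matrix.zero_mul]
    rw [h1, ip_zero_right]
  have hVA' : ip V A' = nucNorm A' := by
    rw [hVdef, ip_add_left, hWA', hSgdef, ip_sgn_self]
    ring
  have key2 : nucNorm A' - nucNorm Ahat ≤ - ip V Δ := by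
    have h1 : ip V Δ = ip V Ahat - ip V A' := by
      rw [hΔdef, ip_sub_right]
    rw [h1, hVA']
    linarith [hVAhat]
  -- ip V Δ = ip Sg Γ + nucNorm Nm
  have hipWΔ : ip W Δ = nucNorm Nm := by
    rw [hWdef, ip_conj, hRsym]
    have h1 : R * Δ * (1 - Qm)ᵀ = Nm := by
      rw [Matrix.transpose_sub, Matrix.transpose_one, hQsym, hNdef]
    rw [h1, ip_sgn_self]
  have hPiSg : Pi * Sg = Sg := by
    rw [hSgdef]
    show Pi * (GG A' * Matrix.diagonal (dhalfinv A') * (UU A')ᵀ) = _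
    rw [← Matrix.mul_assoc, ← Matrix.mul_assoc, hPiG]
    rfl
  have hipSgNm : ip Sg Nm = 0 := by
    rw [ip_comm, hNdef, ip_conj, hRsym]
    have h1 : R * Sg * (1 - Qm)ᵀ = 0 := by
      have h2 : R * Sg = 0 := by
        rw [hSgdef]
        show R * (GG A' * Matrix.diagonal (dhalfinv A') * (UU A')ᵀ) = 0
        rw [← Matrix.mul_assoc, ← Matrix.mul_assoc, hRG, Matrix.zero_mul, Matrix.zero_mul]
      rw [h2, Matrix.zero_mul]
    rw [h1, ip_zero_right]
  have hipSgΔ : ip Sg Δ = ip Sg Γ := by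
    have h1 : ip Sg Δ = ip Sg (Pi * Δ) := by
      calc ip Sg Δ = ip (Pi * Sg) Δ := by rw [hPiSg]
        _ = ip Sg (Piᵀ * Δ) := ip_mul_left _ _ _
        _ = ip Sg (Pi * Δ) := by rw [hPisym]
    rw [h1, ← hsum, ip_add_right, hipSgNm, add_zero]
  have key3 : ip V Δ = ip Sg Γ + nucNorm Nm := by
    rw [hVdef, ip_add_left, hipSgΔ, hipWΔ]
  -- ip B Δ decomposition
  set Φ := P * B + R * B * Qm with hΦdef
  have hsplit : ∀ Z : Matrix (Fin p) (Fin T) ℝ, ip Φ Z = ip B (P * Z) + ip B (R * Z * Qm) := by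
    intro Z
    rw [hΦdef, ip_add_left]
    congr 1
    · rw [ip_mul_left, hPsym]
    · rw [ip_conj, hRsym, hQsym]
  have hPΓ : P * Γ = P * Δ := by
    rw [hΓdef, Matrix.mul_add, ← Matrix.mul_assoc, hPidem]
    have h1 : P * (R * Δ * Qm) = 0 := by
      rw [← Matrix.mul_assoc, ← Matrix.mul_assoc, hPR, Matrix.zero_mul, Matrix.zero_mul]
    rw [h1, add_zero]
  have hRΓQ : R * Γ * Qm = R * Δ * Qm := by
    have h1 : R * Γ = R * Δ * Qm := by
      rw [hΓdef, Matrix.mul_add, ← Matrix.mul_assoc, hRP, Matrix.zero_mul, zero_add,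
        ← Matrix.mul_assoc, ← Matrix.mul_assoc, hRidem]
    rw [h1, Matrix.mul_assoc, hQidem]
  have key4 : ip B Δ = ip Φ Γ + ip B Nm := by
    have h1 : ip B Δ = ip B (Pi * Δ) := by
      calc ip B Δ = ip (Pi * B) Δ := by rw [hPiB]
        _ = ip B (Piᵀ * Δ) := ip_mul_left _ _ _
        _ = ip B (Pi * Δ) := by rw [hPisym]
    have h2 : ip Φ Γ = ip Φ Δ := by
      rw [hsplit Γ, hsplit Δ, hPΓ, hRΓQ]
    have h3 : ip Φ Δ = ip B (Pi * Δ) - ip B Nm := by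
      rw [hsplit Δ]
      have h5 : ip B Γ = ip B (P * Δ) + ip B (R * Δ * Qm) := by
        rw [hΓdef, ip_add_right]
      have h6 : ip B (Pi * Δ) = ip B Γ + ip B Nm := by
        rw [← hsum, ip_add_right]
      linarith
    rw [h2, h3, h1]
    ring
  -- quantitative bounds
  set rr := Real.sqrt ((A'.rank : ℝ)) with hrrdef
  have hrr0 : 0 ≤ rr := Real.sqrt_nonneg _
  have hrr2 : rr^2 = (A'.rank : ℝ) := Real.sq_sqrt (Nat.cast_nonneg _)
  have hfrobSg : frobNorm Sg = rr := by
    rw [frobNorm_eq, hrrdef]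
    congr 1
    calc ip Sg Sg = ((sgn A')ᵀ * sgn A').trace := rfl
      _ = (rowProj A').trace := by rw [sgnT_sgn]
      _ = ((A'.rank : ℝ)) := trace_rowProj A'
  have hBt : opb Bᵀ σ₁ := opb_transpose hopbB
  -- row-square bounds
  have hrowG : ∀ k : Fin T, ∑ j, (((GG A')ᵀ * B) k j)^2 ≤ σ₁^2 * eig A' k := by
    intro k
    have hcol : (fun j => ((GG A')ᵀ * B) k j) = Bᵀ *ᵥ (fun i => GG A' i k) := by
      funext j
      show ∑ i, (GG A')ᵀ k i * B i j = ∑ i, Bᵀ j i * GG A' i k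
      apply Finset.sum_congr rfl
      intro i _
      show GG A' i k * B i j = B i j * GG A' i k
      ring
    have h1 : ∑ j, (((GG A')ᵀ * B) k j)^2
        = dotProduct (Bᵀ *ᵥ (fun i => GG A' i k)) (Bᵀ *ᵥ (fun i => GG A' i k)) := by
      rw [← hcol]
      unfold dotProduct
      exact Finset.sum_congr rfl fun j _ => (sq _)
    have h2 := hBt.2 (fun i => GG A' i k)
    have h3 : dotProduct (fun i => GG A' i k) (fun i => GG A' i k) = eig A' k := by
      rw [← GtG_diag A' k]
      unfold dotProduct
      exact Finset.sum_congr rfl fun i _ => (sq _).symm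
    rw [h1]
    rw [h3] at h2
    exact h2
  have hrowU : ∀ k : Fin T, ∑ j, (((UU A')ᵀ * Bᵀ) k j)^2 ≤ σ₁^2 := by
    intro k
    have hcol : (fun j => ((UU A')ᵀ * Bᵀ) k j) = B *ᵥ (fun i => UU A' i k) := by
      funext j
      show ∑ i, (UU A')ᵀ k i * Bᵀ i j = ∑ i, B j i * UU A' i k
      apply Finset.sum_congr rfl
      intro i _
      show UU A' i k * B j i = B j i * UU A' i k
      ring
    have h1 : ∑ j, (((UU A')ᵀ * Bᵀ) k j)^2
        = dotProduct (B *ᵥ (fun i => UU A' i k)) (B *ᵥ (fun i => UU A' i k)) := by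
      rw [← hcol]
      unfold dotProduct
      exact Finset.sum_congr rfl fun j _ => (sq _)
    have h2 := hopbB.2 (fun i => UU A' i k)
    rw [U_col_unit A' k, mul_one] at h2
    rw [h1]
    exact h2
  have hsum_dind : ∑ k, dind A' k = ((A'.rank : ℝ)) := by
    have h1 : ∑ k, dind A' k = ((Finset.univ.filter (fun k => 0 < eig A' k)).card : ℝ) := by
      unfold dind
      rw [Finset.sum_boole]
    rw [h1, card_pos_eig_eq_rank]
  -- ‖PB‖² bound
  have hPB : ip (P * B) (P * B) ≤ σ₁^2 * (A'.rank : ℝ) := by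
    have h1 : ip (P * B) (P * B) = ip B (P * B) := by
      rw [ip_mulmul, hPsym, hPidem]
    rw [h1, hPdef]
    show ip B ((GG A' * Matrix.diagonal (dinv A') * (GG A')ᵀ) * B) ≤ _
    rw [ip_sandwich]
    rw [← hsum_dind, Finset.mul_sum]
    apply Finset.sum_le_sum
    intro k _
    by_cases h : 0 < eig A' k
    · have hd : dinv A' k = (eig A' k)⁻¹ := by simp [dinv, h]
      have hdnn : 0 ≤ dinv A' k := by rw [hd]; positivity
      have hdi : dind A' k = 1 := by simp [dind, h]
      calc dinv A' k * ∑ j, (((GG A')ᵀ * B) k j)^2 ≤ dinv A' k * (σ₁^2 * eig A' k) :=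
            mul_le_mul_of_nonneg_left (hrowG k) hdnn
        _ = σ₁^2 * ((eig A' k)⁻¹ * eig A' k) := by rw [hd]; ring
        _ = σ₁^2 * dind A' k := by
            rw [inv_mul_cancel₀ (ne_of_gt h), hdi]
    · have hd : dinv A' k = 0 := by simp [dinv, h]
      have hdi : dind A' k = 0 := by simp [dind, h]
      rw [hd, hdi]
      simp
  -- ‖BQ‖² bound
  have hBQ : ip (B * Qm) (B * Qm) ≤ σ₁^2 * (A'.rank : ℝ) := by
    have h1 : ip (B * Qm) (B * Qm) = ip B (B * Qm) := by
      rw [ip_mul_right, hQsym, Matrix.mul_assoc, hQidem]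
    have h2 : ip B (B * Qm) = ip Bᵀ (Qm * Bᵀ) := by
      have h3 := ip_transpose Bᵀ (Qm * Bᵀ)
      rw [Matrix.transpose_transpose, Matrix.transpose_mul, Matrix.transpose_transpose,
        hQsym] at h3
      exact h3
    rw [h1, h2, hQdef]
    show ip Bᵀ ((UU A' * Matrix.diagonal (dind A') * (UU A')ᵀ) * Bᵀ) ≤ _
    rw [ip_sandwich]
    rw [← hsum_dind, Finset.mul_sum]
    apply Finset.sum_le_sum
    intro k _
    by_cases h : 0 < eig A' k
    · have hdi : dind A' k = 1 := by simp [dind, h]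
      rw [hdi, one_mul, mul_one]
      exact hrowU k
    · have hdi : dind A' k = 0 := by simp [dind, h]
      rw [hdi]
      simp
  -- ‖RBQ‖² ≤ ‖BQ‖²
  have hRBQ : ip (R * B * Qm) (R * B * Qm) ≤ σ₁^2 * (A'.rank : ℝ) := by
    have ha : R * B * Qm = R * (B * Qm) := by rw [Matrix.mul_assoc]
    have h1 : ip (R * (B * Qm)) (R * (B * Qm)) = ip (B * Qm) (R * (B * Qm)) := by
      rw [ip_mulmul, hRsym, hRidem]
    have hOneRsym : (1 - R)ᵀ = 1 - R := by
      rw [Matrix.transpose_sub, Matrix.transpose_one, hRsym]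
    have hOneRidem : (1 - R) * (1 - R) = 1 - R := by
      rw [Matrix.sub_mul, Matrix.one_mul, Matrix.mul_sub, Matrix.mul_one, hRidem]
      abel
    have h2 := ip_symIdem_nonneg (1 - R) hOneRsym hOneRidem (B * Qm)
    have h3 : ip (B * Qm) ((1 - R) * (B * Qm))
        = ip (B * Qm) (B * Qm) - ip (B * Qm) (R * (B * Qm)) := by
      rw [Matrix.sub_mul, Matrix.one_mul, ip_sub_right]
    rw [ha, h1]
    linarith [hBQ]
  -- cross term of Φ
  have hcross : ip (P * B) (R * B * Qm) = 0 := by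
    rw [ip_mul_left, hPsym]
    have h1 : P * (R * B * Qm) = 0 := by
      rw [← Matrix.mul_assoc, ← Matrix.mul_assoc, hPR, Matrix.zero_mul, Matrix.zero_mul]
    rw [h1, ip_zero_right]
  have hΦ2 : ip Φ Φ ≤ 2 * (σ₁^2 * (A'.rank : ℝ)) := by
    have h1 : ip Φ Φ = ip (P*B) (P*B) + ip (P*B) (R*B*Qm) + (ip (R*B*Qm) (P*B)
        + ip (R*B*Qm) (R*B*Qm)) := by
      rw [hΦdef, ip_add_left, ip_add_right, ip_add_right]
    have h2 : ip (R*B*Qm) (P*B) = 0 := by rw [ip_comm]; exact hcross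
    rw [h1, hcross, h2]
    linarith [hPB, hRBQ]
  have hfrobΦ : frobNorm Φ ≤ Real.sqrt 2 * σ₁ * rr := by
    rw [frobNorm_eq]
    have h1 : ip Φ Φ ≤ (Real.sqrt 2 * σ₁ * rr)^2 := by
      have h2 : (Real.sqrt 2 * σ₁ * rr)^2 = 2 * (σ₁^2 * rr^2) := by
        rw [mul_pow, mul_pow, Real.sq_sqrt (by norm_num : (2:ℝ) ≥ 0)]
        ring
      rw [h2, hrr2]
      exact hΦ2
    calc Real.sqrt (ip Φ Φ) ≤ Real.sqrt ((Real.sqrt 2 * σ₁ * rr)^2) := Real.sqrt_le_sqrt h1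
      _ = Real.sqrt 2 * σ₁ * rr := Real.sqrt_sq (by positivity)
  -- Γ bound
  have hΓNm : ip Γ Nm = 0 := by
    have g1 : ip (P * Δ) Nm = 0 := by
      rw [ip_mul_left, hPsym]
      have h1 : P * Nm = 0 := by
        rw [hNdef, ← Matrix.mul_assoc, ← Matrix.mul_assoc, hPR, Matrix.zero_mul,
          Matrix.zero_mul]
      rw [h1, ip_zero_right]
    have g2 : ip (R * Δ * Qm) Nm = 0 := by
      rw [ip_conj, hRsym, hQsym]
      have hNQ : Nm * Qm = 0 := by
        have hQ1 : (1 - Qm) * Qm = 0 := by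
          rw [Matrix.sub_mul 1 Qm Qm, Matrix.one_mul, hQidem, sub_self]
        rw [hNdef, Matrix.mul_assoc (R * Δ), hQ1, Matrix.mul_zero]
      have h1 : R * Nm * Qm = 0 := by
        rw [Matrix.mul_assoc, hNQ, Matrix.mul_zero]
      rw [h1, ip_zero_right]
    have g3 : ip Γ Nm = ip (P * Δ) Nm + ip (R * Δ * Qm) Nm := by
      rw [hΓdef, ip_add_left]
    rw [g3, g1, g2, add_zero]
  have hΓle : ip Γ Γ ≤ μ^2 * ip (X*Δ) (X*Δ) := by
    have g3 : ip (Pi * Δ) (Pi * Δ) = ip Γ Γ + ip Nm Nm + 2 * ip Γ Nm := by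
      have h := expand_add Γ Nm
      rw [hsum] at h
      linarith
    have g4 := proj_le_mu X μ hev Δ
    rw [← hPidef] at g4
    have g5 : 0 ≤ ip Nm Nm := ip_self_nonneg Nm
    rw [hΓNm] at g3
    linarith
  have hfrobΓ : frobNorm Γ ≤ μ * frobNorm (X * Δ) := by
    rw [frobNorm_eq, frobNorm_eq]
    calc Real.sqrt (ip Γ Γ) ≤ Real.sqrt (μ^2 * ip (X*Δ) (X*Δ)) := Real.sqrt_le_sqrt hΓle
      _ = μ * Real.sqrt (ip (X*Δ) (X*Δ)) := by
          rw [Real.sqrt_mul (sq_nonneg μ), Real.sqrt_sq hμ.le]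
  have hrank : (A'.rank : ℝ) ≤ (A.rank : ℝ) := by
    exact_mod_cast Matrix.rank_mul_le_right Pi A
  -- assemble
  have haa2 : frobNorm (X*Ahat - X*A₀)^2 = ip (X*Ahat - X*A₀) (X*Ahat - X*A₀) :=
    frobNorm_sq _
  have hbb2 : frobNorm (X*A - X*A₀)^2 = ip (X*A - X*A₀) (X*A - X*A₀) := frobNorm_sq _
  have hdd2 : frobNorm (X*Δ)^2 = ip (X*Ahat - X*A') (X*Ahat - X*A') := by
    rw [frobNorm_sq, hXΔ]
  set aa := frobNorm (X*Ahat - X*A₀) with haadef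
  set bb := frobNorm (X*A - X*A₀) with hbbdef
  set dd := frobNorm (X*Δ) with hdddef
  have hdd0 : 0 ≤ dd := frobNorm_nonneg _
  have hΓ0 : 0 ≤ frobNorm Γ := frobNorm_nonneg _
  have hnuc0 : 0 ≤ nucNorm Nm := nucNorm_nonneg Nm
  clear_value dd bb aa rr Φ V W Sg Γ Nm R Qm P σ₁ B Δ A' Pi
  have step1 : aa^2 + dd^2 ≤ bb^2 + 2 * ip Φ Γ + 2 * ip B Nm
      - lam * ip Sg Γ - lam * nucNorm Nm := by
    have k2 := mul_le_mul_of_nonneg_left key2 hlam0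
    rw [key3] at k2
    have k1 : aa^2 + dd^2 - bb^2 - 2 * ip B Δ ≤ lam * (nucNorm A' - nucNorm Ahat) := by
      rw [haa2, hbb2, hdd2]
      exact key1
    rw [key4] at k1
    linarith [k1, k2]
  have h2s : (0:ℝ) ≤ Real.sqrt 2 := Real.sqrt_nonneg 2
  have step2 : aa^2 + dd^2 ≤ bb^2 + Real.sqrt 2 * lam * (rr * (μ * dd))
      + lam * (rr * (μ * dd)) := by
    have hX0 : 0 ≤ rr * (μ * dd) := mul_nonneg hrr0 (mul_nonneg hμ.le hdd0)
    have m1 : ip Φ Γ ≤ (Real.sqrt 2 * σ₁ * rr) * (μ * dd) := by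
      calc ip Φ Γ ≤ frobNorm Φ * frobNorm Γ := ip_le _ _
        _ ≤ (Real.sqrt 2 * σ₁ * rr) * (μ * dd) :=
            mul_le_mul hfrobΦ hfrobΓ hΓ0 (mul_nonneg (mul_nonneg h2s hσ1) hrr0)
    have m2 : - ip Sg Γ ≤ rr * (μ * dd) := by
      have h := neg_ip_le Sg Γ
      rw [hfrobSg] at h
      calc - ip Sg Γ ≤ rr * frobNorm Γ := h
        _ ≤ rr * (μ * dd) := mul_le_mul_of_nonneg_left hfrobΓ hrr0
    have m3 : ip B Nm ≤ σ₁ * nucNorm Nm := ip_le_opb hopbB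
    have c2 : - (lam * ip Sg Γ) ≤ lam * (rr * (μ * dd)) := by
      have h := mul_le_mul_of_nonneg_left m2 hlam0
      linarith [h]
    have c3 : 2 * ip B Nm - lam * nucNorm Nm ≤ 0 := by
      linarith [m3, mul_nonneg (by linarith : (0:ℝ) ≤ lam - 2*σ₁) hnuc0,
        mul_le_mul_of_nonneg_left m3 (by norm_num : (0:ℝ) ≤ 2)]
    have c4 : 2 * ((Real.sqrt 2 * σ₁ * rr) * (μ * dd)) ≤ Real.sqrt 2 * lam * (rr * (μ * dd)) := by
      have h := mul_le_mul_of_nonneg_right hlam (mul_nonneg h2s hX0)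
      linarith [h]
    linarith [step1, m1, c2, c3, c4]
  exact final_arith hdd0 hrr0 hrr2 hrank hμ hlam0 step2

end OracleAux

/-- Theorem 1: if `σ_{rank X}(X) ≥ 1/μ > 0`, `Y = X A₀ + E`,
`λ ≥ 2 σ₁(Xᵀ E)` and `Â` minimizes `A ↦ ‖Y − XA‖² + λ ∑_k σ_k(A)`, then
`‖X Â − X A₀‖² ≤ inf_A {‖X A − X A₀‖² + (3/2) μ² λ² rank A}`. -/
theorem oracle_inequality {n p T : ℕ} (hT : 0 < T)
    (X : Matrix (Fin n) (Fin p) ℝ) (A₀ : Matrix (Fin p) (Fin T) ℝ)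
    (E Y : Matrix (Fin n) (Fin T) ℝ) (hY : Y = X * A₀ + E)
    (μ : ℝ) (hμ : 0 < μ) (hq : 0 < X.rank)
    (hsv : 1 / μ ≤ svals X ⟨X.rank - 1, by have := X.rank_le_width; omega⟩)
    (lam : ℝ) (hlam : 2 * svals (Xᵀ * E) ⟨0, hT⟩ ≤ lam)
    (Ahat : Matrix (Fin p) (Fin T) ℝ)
    (hmin : ∀ A : Matrix (Fin p) (Fin T) ℝ,
      frobNorm (Y - X * Ahat) ^ 2 + lam * nucNorm Ahat ≤
        frobNorm (Y - X * A) ^ 2 + lam * nucNorm A) :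
    frobNorm (X * Ahat - X * A₀) ^ 2 ≤
      sInf {x : ℝ | ∃ A : Matrix (Fin p) (Fin T) ℝ,
        x = frobNorm (X * A - X * A₀) ^ 2 + (3 / 2) * μ ^ 2 * lam ^ 2 * A.rank} := by
  apply le_csInf
  · exact ⟨_, A₀, rfl⟩
  · rintro x ⟨A, rfl⟩
    exact OracleAux.master hT X A₀ E Y hY μ hμ hq (by have := X.rank_le_width; omega)
      hsv lam hlam Ahat hmin A
end
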